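/- arXiv:2001.06820 — 9 statements merged into one kernel-verified Lean document; each statement's English description precedes it below -/
import Mathlib

section
/- Let a > −1, b > −1 and c > max{0, a−b} be real numbers. Then the function x ↦ W(x; a, b, c) is twice differentiable on (0, ∞) and satisfies, for all x > 0, the second-order differential equation x² W''(x; a, b, c) + (x − (a+b−1)) x W'(x; a, b, c) + (ab − (c+b−1)x) W(x; a, b, c) = 0. -/
open MeasureTheory Filter Set

/-- Confluent hypergeometric function of the second kind (Tricomi function),
via its integral representation, valid for `α > 0`, `x > 0`. -/
noncomputable def TricomiU (α β x : ℝ) : ℝ :=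
  (1 / Real.Gamma α) *
    ∫ t in Set.Ioi (0:ℝ), t ^ (α - 1) * (1 + t) ^ (β - α - 1) * Real.exp (-t * x)

/-- The weight function `W(x; a, b, c)`. -/
noncomputable def W (a b c x : ℝ) : ℝ :=
  (Real.Gamma (c + b + 1) / (Real.Gamma (a + 1) * Real.Gamma (b + 1))) *
    Real.exp (-x) * x ^ a * TricomiU c (a - b + 1) x

/-!
For fixed `q` put `I_p(x) = ∫₀^∞ t^p (1+t)^q e^{-tx} dt`, so that `U(α, β, ·) = I_{α-1} / Γ(α)`
with `q = β - α - 1`. Differentiating under the integral sign gives `I_p' = -I_{p+1}`, and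
integrating `d/dt [t^α (1+t)^{q+1} e^{-tx}]` over `(0, ∞)` gives the three-term relation
`α I_{α-1} + (β - x) I_α - x I_{α+1} = 0`, which is Kummer's equation
`x U'' + (β - x) U' - α U = 0`. For `w = K e^{-x} x^a u` one computes that the left-hand side of
the equation for `W` is `K e^{-x} x^{a+1} (x u'' + (a - b + 1 - x) u' - c u)`.
-/

open Topology

noncomputable def tricomiIntegral (p q x : ℝ) : ℝ :=
  ∫ t in Ioi (0 : ℝ), t ^ p * (1 + t) ^ q * Real.exp (-t * x)

lemma one_add_rpow_le {t : ℝ} (ht : 0 ≤ t) (q : ℝ) :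
    (1 + t) ^ q ≤ 2 ^ (max q 1 - 1) * (1 + t ^ max q 1) := by
  lift t to NNReal using ht
  have h := NNReal.rpow_add_le_mul_rpow_add_rpow 1 t (le_max_right q 1)
  rw [NNReal.one_rpow] at h
  calc (1 + (t : ℝ)) ^ q ≤ (1 + t) ^ max q 1 :=
        Real.rpow_le_rpow_of_exponent_le (by simp) (le_max_left _ _)
    _ ≤ 2 ^ (max q 1 - 1) * (1 + t ^ max q 1) := by exact_mod_cast h

lemma continuousOn_tricomiIntegrand (p q x : ℝ) :
    ContinuousOn (fun t : ℝ => t ^ p * (1 + t) ^ q * Real.exp (-t * x)) (Ioi 0) := by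
  intro t (ht : 0 < t)
  have h1t : 0 < 1 + t := by linarith
  exact ContinuousAt.continuousWithinAt (by fun_prop (disch := exact Or.inl (by positivity)))

lemma integrableOn_tricomiIntegrand {p : ℝ} (q : ℝ) {x : ℝ} (hp : -1 < p) (hx : 0 < x) :
    IntegrableOn (fun t : ℝ => t ^ p * (1 + t) ^ q * Real.exp (-t * x)) (Ioi 0) := by
  have hexp {s : ℝ} (hs : -1 < s) :
      IntegrableOn (fun t : ℝ => t ^ s * Real.exp (-t * x)) (Ioi 0) := by
    refine (integrableOn_rpow_mul_exp_neg_mul_rpow hs zero_lt_one hx).congr_fun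
      (fun t _ => ?_) measurableSet_Ioi
    simp only [Real.rpow_one, neg_mul, mul_comm x t]
  set r := max q 1
  have hpr : -1 < p + r := by linarith [le_max_right q 1]
  refine Integrable.mono' (((hexp hp).add (hexp hpr)).const_mul (2 ^ (r - 1)))
    ((continuousOn_tricomiIntegrand p q x).aestronglyMeasurable measurableSet_Ioi) ?_
  refine (ae_restrict_iff' measurableSet_Ioi).2 (Eventually.of_forall fun t (ht : 0 < t) => ?_)
  rw [Real.norm_of_nonneg (by positivity)]
  calc t ^ p * (1 + t) ^ q * Real.exp (-t * x)
      ≤ t ^ p * (2 ^ (r - 1) * (1 + t ^ r)) * Real.exp (-t * x) := by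
        gcongr; exact one_add_rpow_le ht.le q
    _ = 2 ^ (r - 1) * (t ^ p * Real.exp (-t * x) + t ^ (p + r) * Real.exp (-t * x)) := by
        rw [Real.rpow_add ht]; ring

lemma hasDerivAt_tricomiIntegral {p : ℝ} (q : ℝ) {x : ℝ} (hp : -1 < p) (hx : 0 < x) :
    HasDerivAt (tricomiIntegral p q) (-tricomiIntegral (p + 1) q x) x := by
  have hmeas (r y : ℝ) : AEStronglyMeasurable
      (fun t : ℝ => t ^ r * (1 + t) ^ q * Real.exp (-t * y)) (volume.restrict (Ioi 0)) :=
    (continuousOn_tricomiIntegrand r q y).aestronglyMeasurable measurableSet_Ioi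
  -- for `y` within `x / 2` of `x`, the derivative in `y` is dominated via `e^{-t y} ≤ e^{-t x / 2}`
  have key := hasDerivAt_integral_of_dominated_loc_of_deriv_le
    (F' := fun y t => -(t ^ (p + 1) * (1 + t) ^ q * Real.exp (-t * y)))
    (Metric.ball_mem_nhds x (half_pos hx)) (Eventually.of_forall (hmeas p))
    (integrableOn_tricomiIntegrand q hp hx) (hmeas (p + 1) x).neg ?_
    (integrableOn_tricomiIntegrand (p := p + 1) q (by linarith) (half_pos hx)) ?_
  · rw [integral_neg] at key
    exact key.2
  · refine (ae_restrict_iff' measurableSet_Ioi).2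
      (Eventually.of_forall fun t (ht : 0 < t) y hy => ?_)
    have hy2 : x / 2 ≤ y := by
      rw [Metric.mem_ball, Real.dist_eq, abs_lt] at hy; linarith
    rw [norm_neg, Real.norm_of_nonneg (by positivity)]
    gcongr _ * Real.exp ?_
    nlinarith
  · refine (ae_restrict_iff' measurableSet_Ioi).2
      (Eventually.of_forall fun t (ht : 0 < t) y _ => ?_)
    refine (((hasDerivAt_id y).const_mul (-t)).exp.const_mul (t ^ p * (1 + t) ^ q)).congr_deriv ?_
    simp only [id, Real.rpow_add_one ht.ne']
    ring

lemma tricomiIntegral_recurrence {α : ℝ} (q : ℝ) {x : ℝ} (hα : 0 < α) (hx : 0 < x) :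
    α * tricomiIntegral (α - 1) q x + (α + q + 1 - x) * tricomiIntegral α q x
      - x * tricomiIntegral (α + 1) q x = 0 := by
  set f : ℝ → ℝ := fun t => t ^ α * (1 + t) ^ (q + 1) * Real.exp (-t * x)
  set g : ℝ → ℝ := fun t => α * (t ^ (α - 1) * (1 + t) ^ q * Real.exp (-t * x))
    + (α + q + 1 - x) * (t ^ α * (1 + t) ^ q * Real.exp (-t * x))
    - x * (t ^ (α + 1) * (1 + t) ^ q * Real.exp (-t * x))
  have hderiv : ∀ t ∈ Ioi (0 : ℝ), HasDerivAt f (g t) t := by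
    intro t (ht : 0 < t)
    have h1t : 0 < 1 + t := by linarith
    have h := ((Real.hasDerivAt_rpow_const (p := α) (Or.inl ht.ne')).mul
      (((hasDerivAt_id t).const_add 1).rpow_const (p := q + 1) (Or.inl h1t.ne'))).mul
      ((hasDerivAt_id t).neg.mul_const x).exp
    refine h.congr_deriv ?_
    have hα1 : t ^ α = t ^ (α - 1) * t := by rw [← Real.rpow_add_one ht.ne', sub_add_cancel]
    simp only [g, Pi.mul_apply, Pi.neg_apply, id, add_sub_cancel_right, Real.rpow_add_one ht.ne',
      Real.rpow_add_one h1t.ne', hα1]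
    ring
  have hint (r : ℝ) (hr : -1 < r) := integrableOn_tricomiIntegrand q hr hx
  have hg : IntegrableOn g (Ioi 0) :=
    (((hint _ (by linarith)).const_mul α).add ((hint α (by linarith)).const_mul _)).sub
      ((hint _ (by linarith)).const_mul x)
  -- the boundary terms vanish: `f 0 = 0` as `α > 0`, and `f → 0` at `∞` as `f`, `f'` are integrable
  have hlim : Tendsto f atTop (𝓝 0) := tendsto_zero_of_hasDerivAt_of_integrableOn_Ioi hderiv hg
    (integrableOn_tricomiIntegrand (q + 1) (by linarith) hx)
  have hcont : ContinuousWithinAt f (Ici 0) 0 :=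
    ContinuousAt.continuousWithinAt (by fun_prop (disch := first | exact Or.inr hα.le | norm_num))
  have hFTC := integral_Ioi_of_hasDerivAt_of_tendsto hcont hderiv hg hlim
  rw [show f 0 = 0 by simp [f, Real.zero_rpow hα.ne'], sub_zero, integral_sub, integral_add,
    integral_const_mul, integral_const_mul, integral_const_mul] at hFTC
  · exact hFTC
  all_goals first
    | exact (hint _ (by linarith)).const_mul _
    | exact ((hint _ (by linarith)).const_mul _).add ((hint _ (by linarith)).const_mul _)

lemma tricomiU_eq (α β x : ℝ) :
    TricomiU α β x = 1 / Real.Gamma α * tricomiIntegral (α - 1) (β - α - 1) x := rfl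

lemma hasDerivAt_tricomiU {α : ℝ} (β : ℝ) {x : ℝ} (hα : 0 < α) (hx : 0 < x) :
    HasDerivAt (TricomiU α β) (-(1 / Real.Gamma α) * tricomiIntegral α (β - α - 1) x) x := by
  have h := (hasDerivAt_tricomiIntegral (β - α - 1) (p := α - 1) (by linarith) hx).const_mul
    (1 / Real.Gamma α)
  rw [sub_add_cancel] at h
  exact h.congr_deriv (by ring)

lemma hasDerivAt_deriv_tricomiU {α : ℝ} (β : ℝ) {x : ℝ} (hα : 0 < α) (hx : 0 < x) :
    HasDerivAt (deriv (TricomiU α β))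
      (1 / Real.Gamma α * tricomiIntegral (α + 1) (β - α - 1) x) x := by
  have hderiv : deriv (TricomiU α β) =ᶠ[𝓝 x]
      fun y => -(1 / Real.Gamma α) * tricomiIntegral α (β - α - 1) y := by
    filter_upwards [Ioi_mem_nhds hx] with y hy using (hasDerivAt_tricomiU β hα hy).deriv
  refine (((hasDerivAt_tricomiIntegral (β - α - 1) (by linarith) hx).const_mul _).congr_deriv ?_)
    |>.congr_of_eventuallyEq hderiv
  ring

lemma tricomiU_kummer_equation {α : ℝ} (β : ℝ) {x : ℝ} (hα : 0 < α) (hx : 0 < x) :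
    x * deriv (deriv (TricomiU α β)) x + (β - x) * deriv (TricomiU α β) x
      - α * TricomiU α β x = 0 := by
  rw [(hasDerivAt_deriv_tricomiU β hα hx).deriv, (hasDerivAt_tricomiU β hα hx).deriv, tricomiU_eq]
  linear_combination (-(1 / Real.Gamma α)) * tricomiIntegral_recurrence (β - α - 1) hα hx

lemma weight_ode_of_kummer_equation {u w : ℝ → ℝ} {a b α K x : ℝ}
    (hw : w = fun y => K * Real.exp (-y) * y ^ a * u y) (hx : 0 < x)
    (hu : ∀ y > 0, DifferentiableAt ℝ u y) (hu' : DifferentiableAt ℝ (deriv u) x)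
    (hkummer : x * deriv (deriv u) x + (a - b + 1 - x) * deriv u x - α * u x = 0) :
    DifferentiableAt ℝ w x ∧ DifferentiableAt ℝ (deriv w) x ∧
      x ^ 2 * deriv (deriv w) x + (x - (a + b - 1)) * x * deriv w x
        + (a * b - (α + b - 1) * x) * w x = 0 := by
  subst hw
  set E : ℝ → ℝ := fun y => K * Real.exp (-y) * y ^ a
  have hE : ∀ y > 0, HasDerivAt E (E y * (a * y⁻¹ - 1)) y := by
    intro y hy
    refine (((hasDerivAt_neg y).exp.const_mul K).mul
      (Real.hasDerivAt_rpow_const (p := a) (Or.inl hy.ne'))).congr_deriv ?_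
    rw [Real.rpow_sub_one hy.ne', div_eq_mul_inv]
    ring
  have hw' : ∀ y > 0,
      HasDerivAt (fun y => E y * u y) (E y * ((a * y⁻¹ - 1) * u y + deriv u y)) y :=
    fun y hy => ((hE y hy).mul (hu y hy).hasDerivAt).congr_deriv (by ring)
  have hderiv : deriv (fun y => E y * u y) =ᶠ[𝓝 x]
      fun y => E y * ((a * y⁻¹ - 1) * u y + deriv u y) := by
    filter_upwards [Ioi_mem_nhds hx] with y hy using (hw' y hy).deriv
  have hw'' := ((hE x hx).mul (((((hasDerivAt_inv hx.ne').const_mul a).sub_const 1).mul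
    (hu x hx).hasDerivAt).add hu'.hasDerivAt)).congr_of_eventuallyEq hderiv
  refine ⟨(hw' x hx).differentiableAt, hw''.differentiableAt, ?_⟩
  rw [hw''.deriv, (hw' x hx).deriv, Pi.add_apply, Pi.mul_apply]
  field_simp
  linear_combination (E x * x) * hkummer

theorem W_second_order_ODE_general (a b c : ℝ)
    (hc : c > max 0 (a - b)) :
    ∀ x > (0:ℝ),
      DifferentiableAt ℝ (W a b c) x ∧
      DifferentiableAt ℝ (deriv (W a b c)) x ∧
      x ^ 2 * deriv (deriv (W a b c)) x
        + (x - (a + b - 1)) * x * deriv (W a b c) x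
        + (a * b - (c + b - 1) * x) * W a b c x = 0 := by
  intro x hx
  have hc0 : 0 < c := (le_max_left 0 (a - b)).trans_lt hc
  exact weight_ode_of_kummer_equation rfl hx
    (fun y hy => (hasDerivAt_tricomiU _ hc0 hy).differentiableAt)
    (hasDerivAt_deriv_tricomiU _ hc0 hx).differentiableAt
    (tricomiU_kummer_equation (a - b + 1) hc0 hx)

theorem W_second_order_ODE (a b c : ℝ) (ha : a > -1) (hb : b > -1)
    (hc : c > max 0 (a - b)) :
    ∀ x > (0:ℝ),
      DifferentiableAt ℝ (W a b c) x ∧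
      DifferentiableAt ℝ (deriv (W a b c)) x ∧
      x ^ 2 * deriv (deriv (W a b c)) x
        + (x - (a + b - 1)) * x * deriv (W a b c) x
        + (a * b - (c + b - 1) * x) * W a b c x = 0 :=
  W_second_order_ODE_general a b c hc
end

section
/- Let a > −1, b > −1 and c > max{0, a−b} be real numbers. Then for all x > 0: (i) d/dx ( x W(x; a, b, c) ) = −(x + c − a − 1) W(x; a, b, c) + (c(c+b−a)/(c+b+1)) W(x; a, b, c+1), and (ii) d/dx ( x W(x; a, b, c+1) ) = (c+b+1) ( W(x; a, b, c+1) − W(x; a, b, c) ). -/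
open MeasureTheory Filter Set
open Topology

lemma tendsto_aux {x : ℝ} (p q : ℝ) (hx : 0 < x) :
    Tendsto (fun t : ℝ => t ^ p * (1 + t) ^ q * Real.exp (-t * x)) atTop (𝓝 0) := by
  have hA : Tendsto (fun t : ℝ => t ^ p * Real.exp (-(x/2) * t)) atTop (𝓝 0) :=
    tendsto_rpow_mul_exp_neg_mul_atTop_nhds_zero p (x/2) (by linarith)
  have hB : Tendsto (fun t : ℝ => (1 + t) ^ q * Real.exp (-(x/2) * (1 + t))) atTop (𝓝 0) := by
    have := (tendsto_rpow_mul_exp_neg_mul_atTop_nhds_zero q (x/2) (by linarith)).comp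
      (tendsto_atTop_add_const_left atTop 1 tendsto_id)
    simpa [Function.comp_def] using this
  have h2 := (hA.mul hB).const_mul (Real.exp (x/2))
  rw [mul_zero, mul_zero] at h2
  refine h2.congr' ?_
  filter_upwards [eventually_gt_atTop (0:ℝ)] with t ht
  rw [show -t*x = (-(x/2)*t) + (-(x/2)*(1+t)) + x/2 by ring, Real.exp_add, Real.exp_add]
  ring

lemma integrable_aux {p q x : ℝ} (hp : -1 < p) (hx : 0 < x) :
    IntegrableOn (fun t : ℝ => t ^ p * (1 + t) ^ q * Real.exp (-t * x)) (Ioi 0) := by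
  set m := max q 0 with hm
  have hm0 : 0 ≤ m := le_max_right _ _
  have hqm : q ≤ m := le_max_left _ _
  have h1 : IntegrableOn (fun t : ℝ => (2:ℝ) ^ m * ((t ^ p + t ^ (p + m)) * Real.exp (-x * t))) (Ioi 0) := by
    apply Integrable.const_mul
    have i1 : IntegrableOn (fun t : ℝ => t ^ p * Real.exp (-x * t)) (Ioi 0) := by
      have := integrableOn_rpow_mul_exp_neg_mul_rpow hp (by norm_num : (0:ℝ) < 1) hx
      refine this.congr_fun (fun t ht => ?_) measurableSet_Ioi
      simp only [Real.rpow_one]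
    have i2 : IntegrableOn (fun t : ℝ => t ^ (p + m) * Real.exp (-x * t)) (Ioi 0) := by
      have := integrableOn_rpow_mul_exp_neg_mul_rpow (by linarith : (-1:ℝ) < p + m) (by norm_num : (0:ℝ) < 1) hx
      refine this.congr_fun (fun t ht => ?_) measurableSet_Ioi
      simp only [Real.rpow_one]
    simpa [add_mul, IntegrableOn, Pi.add_def] using i1.add i2
  refine Integrable.mono' h1 ?_ ?_
  · apply ContinuousOn.aestronglyMeasurable ?_ measurableSet_Ioi
    apply ContinuousOn.mul
    apply ContinuousOn.mul
    · exact fun t ht => (Real.continuousAt_rpow_const t p (Or.inl (ne_of_gt ht))).continuousWithinAt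
    · exact fun t ht => ((Real.continuousAt_rpow_const (1+t) q
        (Or.inl (by simp at ht; positivity))).comp (by fun_prop)).continuousWithinAt
    · fun_prop
  · filter_upwards [ae_restrict_mem measurableSet_Ioi] with t ht
    have ht0 : (0:ℝ) < t := ht
    have h1t : (0:ℝ) < 1 + t := by linarith
    rw [Real.norm_eq_abs, abs_of_nonneg (by positivity)]
    have key : (1 + t) ^ q ≤ 2 ^ m * (1 + t ^ m) := by
      calc (1 + t) ^ q ≤ (1 + t) ^ m := Real.rpow_le_rpow_of_exponent_le (by linarith) hqm
        _ ≤ (2 * max 1 t) ^ m := by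
            apply Real.rpow_le_rpow (by linarith)
            rcases le_total t 1 with h | h
            · rw [max_eq_left h]; linarith
            · rw [max_eq_right h]; linarith
            · exact hm0
        _ = 2 ^ m * (max 1 t) ^ m := Real.mul_rpow (by norm_num) (by positivity)
        _ ≤ 2 ^ m * (1 + t ^ m) := by
            gcongr
            rcases le_total t 1 with h | h
            · rw [max_eq_left h, Real.one_rpow]
              nlinarith [Real.rpow_nonneg ht0.le m]
            · rw [max_eq_right h]
              have : (0:ℝ) ≤ 1 := by norm_num
              linarith [Real.rpow_nonneg (le_of_lt ht0) m]
    calc t ^ p * (1 + t) ^ q * Real.exp (-t * x)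
        ≤ t ^ p * (2 ^ m * (1 + t ^ m)) * Real.exp (-t * x) := by
          apply mul_le_mul_of_nonneg_right (by gcongr)
          positivity
      _ = 2 ^ m * ((t ^ p + t ^ p * t ^ m) * Real.exp (-x * t)) := by rw [show -t*x = -x*t by ring]; ring
      _ = 2 ^ m * ((t ^ p + t ^ (p + m)) * Real.exp (-x * t)) := by
          rw [← Real.rpow_add ht0]

noncomputable def J (p q x : ℝ) : ℝ :=
  ∫ t in Ioi (0:ℝ), t ^ p * (1 + t) ^ q * Real.exp (-t * x)

lemma contOn_aux (p q y : ℝ) :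
    ContinuousOn (fun t : ℝ => t ^ p * (1 + t) ^ q * Real.exp (-t * y)) (Ioi 0) := by
  apply ContinuousOn.mul
  apply ContinuousOn.mul
  · exact fun t ht => (Real.continuousAt_rpow_const t p (Or.inl (ne_of_gt ht))).continuousWithinAt
  · exact fun t ht => ((Real.continuousAt_rpow_const (1+t) q
      (Or.inl (by simp at ht; positivity))).comp (by fun_prop)).continuousWithinAt
  · fun_prop

lemma hasDerivAt_J {p q : ℝ} (x : ℝ) (hp : -1 < p) (hx : 0 < x) :
    HasDerivAt (fun y => J p q y) (-(J (p+1) q x)) x := by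
  have key := hasDerivAt_integral_of_dominated_loc_of_deriv_le
    (μ := volume.restrict (Ioi (0:ℝ))) (x₀ := x)
    (F := fun y t => t ^ p * (1 + t) ^ q * Real.exp (-t * y))
    (F' := fun y t => -(t ^ (p+1) * (1 + t) ^ q * Real.exp (-t * y)))
    (bound := fun t => t ^ (p+1) * (1 + t) ^ q * Real.exp (-t * (x/2)))
    (s := Metric.ball x (x/2)) (Metric.ball_mem_nhds x (half_pos hx))
    (Eventually.of_forall fun y =>
      ((contOn_aux p q y).aestronglyMeasurable measurableSet_Ioi))
    (integrable_aux hp hx)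
    (((contOn_aux (p+1) q x).aestronglyMeasurable measurableSet_Ioi).neg)
    ?_ (integrable_aux (by linarith) (half_pos hx)) ?_
  · have := key.2
    rw [integral_neg] at this
    exact this
  · filter_upwards [ae_restrict_mem measurableSet_Ioi] with t ht y hy
    have ht0 : (0:ℝ) < t := ht
    have hy2 : x/2 ≤ y := by
      have := abs_lt.mp (mem_ball_iff_norm.mp hy)
      linarith [this.1]
    have h1t : (0:ℝ) < 1 + t := by linarith
    rw [norm_neg, Real.norm_eq_abs, abs_of_nonneg (by positivity)]
    rw [mul_assoc, mul_assoc]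
    refine mul_le_mul_of_nonneg_left ?_ (by positivity)
    refine mul_le_mul_of_nonneg_left ?_ (by positivity)
    exact Real.exp_le_exp.mpr (by nlinarith)
  · filter_upwards [ae_restrict_mem measurableSet_Ioi] with t ht y _
    have ht0 : (0:ℝ) < t := ht
    have h0 : HasDerivAt (fun z : ℝ => -z * t) (-t) y := by
      simpa using (hasDerivAt_id y).neg.mul_const t
    have h0' : HasDerivAt (fun z : ℝ => -t * z) (-t) y := by
      refine h0.congr_deriv rfl |>.congr_of_eventuallyEq ?_
      filter_upwards with z using by ring
    have h := (h0'.exp).const_mul (t ^ p * (1 + t) ^ q)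
    refine h.congr_deriv ?_
    rw [Real.rpow_add_one ht0.ne' p]; ring

lemma ibp_J {p q x : ℝ} (hp : -1 < p) (hx : 0 < x) :
    x * J (p+1) q x = (p+1) * J p q x + q * J (p+1) (q-1) x := by
  set F : ℝ → ℝ := fun t => t ^ (p+1) * (1 + t) ^ q * Real.exp (-t * x) with hF
  set F' : ℝ → ℝ := fun t =>
    (p+1) * (t ^ p * (1 + t) ^ q * Real.exp (-t * x))
      + q * (t ^ (p+1) * (1 + t) ^ (q-1) * Real.exp (-t * x))
      - x * (t ^ (p+1) * (1 + t) ^ q * Real.exp (-t * x)) with hF'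
  have hint1 := integrable_aux hp hx (q := q)
  have hint2 := integrable_aux (by linarith : (-1:ℝ) < p+1) hx (q := q-1)
  have hint3 := integrable_aux (by linarith : (-1:ℝ) < p+1) hx (q := q)
  have f'int : IntegrableOn F' (Ioi 0) :=
    ((hint1.const_mul _).add (hint2.const_mul _)).sub (hint3.const_mul _)
  have hcont : ContinuousWithinAt F (Ici 0) 0 := by
    apply ContinuousAt.continuousWithinAt
    apply ContinuousAt.mul
    apply ContinuousAt.mul
    · exact Real.continuousAt_rpow_const 0 (p+1) (Or.inr (by linarith))
    · have h0 : ContinuousAt (fun t : ℝ => 1 + t) 0 := by fun_prop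
      have h1 : ContinuousAt (fun s : ℝ => s ^ q) ((fun t : ℝ => 1 + t) 0) :=
        Real.continuousAt_rpow_const _ q (Or.inl (by norm_num))
      exact h1.comp h0
    · fun_prop
  have hderiv : ∀ t ∈ Ioi (0:ℝ), HasDerivAt F (F' t) t := by
    intro t ht
    have ht0 : (0:ℝ) < t := ht
    have h1 : HasDerivAt (fun t : ℝ => t ^ (p+1)) ((p+1) * t ^ p) t := by
      have := Real.hasDerivAt_rpow_const (x := t) (p := p+1) (Or.inl ht0.ne')
      simpa using this
    have h2 : HasDerivAt (fun t : ℝ => (1 + t) ^ q) (q * (1 + t) ^ (q-1)) t := by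
      have h0 : HasDerivAt (fun t : ℝ => 1 + t) 1 t := by
        simpa using (hasDerivAt_id t).const_add 1
      have := (Real.hasDerivAt_rpow_const (x := 1 + t) (p := q)
        (Or.inl (by positivity))).comp t h0
      simpa [Function.comp_def] using this
    have h3 : HasDerivAt (fun t : ℝ => Real.exp (-t * x)) (Real.exp (-t * x) * (-1 * x)) t := by
      have h0 : HasDerivAt (fun z : ℝ => -z * x) (-1 * x) t := by
        simpa using (hasDerivAt_id t).neg.mul_const x
      exact h0.exp
    have := (h1.mul h2).mul h3
    simp only [Pi.mul_apply] at this
    refine this.congr_deriv ?_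
    rw [hF']
    ring
  have hzero : ∫ t in Ioi (0:ℝ), F' t = 0 - F 0 := by
    exact integral_Ioi_of_hasDerivAt_of_tendsto hcont hderiv f'int
      (by simpa [hF] using tendsto_aux (p+1) q hx)
  have hF0 : F 0 = 0 := by
    simp [hF, Real.zero_rpow (by linarith : p + 1 ≠ 0)]
  rw [hF0, sub_zero] at hzero
  have expand : ∫ t in Ioi (0:ℝ), F' t
      = (p+1) * J p q x + q * J (p+1) (q-1) x - x * J (p+1) q x := by
    have e1 := integral_sub (μ := volume.restrict (Ioi 0))
      (f := fun t : ℝ => (p+1) * (t ^ p * (1 + t) ^ q * Real.exp (-t * x))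
        + q * (t ^ (p+1) * (1 + t) ^ (q-1) * Real.exp (-t * x)))
      (g := fun t : ℝ => x * (t ^ (p+1) * (1 + t) ^ q * Real.exp (-t * x)))
      ((hint1.const_mul _).add (hint2.const_mul _)) (hint3.const_mul _)
    have e2 := integral_add (μ := volume.restrict (Ioi 0))
      (f := fun t : ℝ => (p+1) * (t ^ p * (1 + t) ^ q * Real.exp (-t * x)))
      (g := fun t : ℝ => q * (t ^ (p+1) * (1 + t) ^ (q-1) * Real.exp (-t * x)))
      (hint1.const_mul _) (hint2.const_mul _)
    rw [hF']
    rw [e1, e2, integral_const_mul, integral_const_mul, integral_const_mul]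
    rfl
  rw [expand] at hzero
  linarith

lemma split_J {p q x : ℝ} (hp : -1 < p) (hx : 0 < x) :
    J p (q+1) x = J p q x + J (p+1) q x := by
  have h1 := integrable_aux hp hx (q := q)
  have h2 := integrable_aux (by linarith : (-1:ℝ) < p+1) hx (q := q)
  have : J p (q+1) x = ∫ t in Ioi (0:ℝ),
      (t ^ p * (1+t) ^ q * Real.exp (-t*x) + t ^ (p+1) * (1+t) ^ q * Real.exp (-t*x)) := by
    apply setIntegral_congr_fun measurableSet_Ioi
    intro t ht
    have ht0 : (0:ℝ) < t := ht
    dsimp only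
    rw [Real.rpow_add_one (by positivity : (1:ℝ)+t ≠ 0) q,
      Real.rpow_add_one ht0.ne' p]
    ring
  rw [this, integral_add h1 h2]
  rfl


theorem deriv_xW (a b c : ℝ) (ha : a > -1) (hb : b > -1) (hc : c > max 0 (a - b)) :
    ∀ x > (0:ℝ),
      deriv (fun y => y * W a b c y) x
        = -(x + c - a - 1) * W a b c x
          + (c * (c + b - a) / (c + b + 1)) * W a b (c + 1) x ∧
      deriv (fun y => y * W a b (c + 1) y) x
        = (c + b + 1) * (W a b (c + 1) x - W a b c x) := by
  intro x hx
  have hc0 : (0:ℝ) < c := lt_of_le_of_lt (le_max_left 0 (a-b)) hc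
  have hcab : a - b < c := lt_of_le_of_lt (le_max_right 0 (a-b)) hc
  have hGa : 0 < Real.Gamma (a+1) := Real.Gamma_pos_of_pos (by linarith)
  have hGb : 0 < Real.Gamma (b+1) := Real.Gamma_pos_of_pos (by linarith)
  have hGc : 0 < Real.Gamma c := Real.Gamma_pos_of_pos hc0
  have hGcb : 0 < Real.Gamma (c+b+1) := Real.Gamma_pos_of_pos (by linarith)
  have hcb1 : (0:ℝ) < c + b + 1 := by linarith
  have hΓc1 : Real.Gamma (c+1) = c * Real.Gamma c := Real.Gamma_add_one hc0.ne'
  have hΓcb : Real.Gamma (c+1+b+1) = (c+b+1) * Real.Gamma (c+b+1) := by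
    rw [show c+1+b+1 = (c+b+1)+1 by ring, Real.Gamma_add_one hcb1.ne']
  set C1 : ℝ := Real.Gamma (c+b+1) / (Real.Gamma (a+1) * Real.Gamma (b+1)) * (1 / Real.Gamma c)
    with hC1
  set C2 : ℝ := Real.Gamma (c+1+b+1) / (Real.Gamma (a+1) * Real.Gamma (b+1)) *
    (1 / Real.Gamma (c+1)) with hC2
  have hW : ∀ y : ℝ, W a b c y = C1 * (Real.exp (-y) * y ^ a * J (c-1) (a-b-c) y) := by
    intro y
    unfold W TricomiU J
    rw [show a - b + 1 - c - 1 = a - b - c by ring]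
    ring
  have hW1 : ∀ y : ℝ, W a b (c+1) y = C2 * (Real.exp (-y) * y ^ a * J c (a-b-c-1) y) := by
    intro y
    unfold W TricomiU J
    rw [show c + 1 - 1 = c by ring, show a - b + 1 - (c+1) - 1 = a - b - c - 1 by ring]
    ring
  have hJ1 : HasDerivAt (fun y => J (c-1) (a-b-c) y) (-(J c (a-b-c) x)) x := by
    have := hasDerivAt_J (p := c-1) (q := a-b-c) x (by linarith) hx
    rwa [show c-1+1 = c by ring] at this
  have hJ2 : HasDerivAt (fun y => J c (a-b-c-1) y) (-(J (c+1) (a-b-c-1) x)) x :=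
    hasDerivAt_J (p := c) (q := a-b-c-1) x (by linarith) hx
  have hpow : HasDerivAt (fun y : ℝ => y ^ (a+1)) ((a+1) * x ^ a) x := by
    have := Real.hasDerivAt_rpow_const (x := x) (p := a+1) (Or.inl hx.ne')
    rwa [show a+1-1 = a by ring] at this
  have hexp : HasDerivAt (fun y : ℝ => Real.exp (-y)) (-Real.exp (-x)) x := by
    simpa using (hasDerivAt_neg x).exp
  have hibp : x * J c (a-b-c) x
      = c * J (c-1) (a-b-c) x + (a-b-c) * J c (a-b-c-1) x := by
    have := ibp_J (p := c-1) (q := a-b-c) (by linarith) hx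
    rwa [show c-1+1 = c by ring] at this
  have hsplit : J c (a-b-c) x = J c (a-b-c-1) x + J (c+1) (a-b-c-1) x := by
    have := split_J (p := c) (q := a-b-c-1) (by linarith) hx
    rwa [show a-b-c-1+1 = a-b-c by ring] at this
  have hxa1 : x ^ (a+1) = x ^ a * x := Real.rpow_add_one hx.ne' a
  constructor
  · have hD1 := ((hexp.mul hpow).mul hJ1).const_mul C1
    simp only [Pi.mul_apply] at hD1
    have hEq1 : (fun y => y * W a b c y)
        =ᶠ[𝓝 x] (fun y => C1 * (Real.exp (-y) * y ^ (a+1) * J (c-1) (a-b-c) y)) := by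
      filter_upwards [eventually_gt_nhds hx] with y hy
      rw [hW y, Real.rpow_add_one hy.ne' a]
      ring
    rw [hEq1.deriv_eq, hD1.deriv, hW x, hW1 x, hxa1]
    have hCC : c * (c+b-a) / (c+b+1) * C2 = (c+b-a) * C1 := by
      rw [hC1, hC2, hΓcb, hΓc1]
      field_simp
    linear_combination (-(Real.exp (-x) * x ^ a * C1)) * hibp
      + (-(Real.exp (-x) * x ^ a * J c (a-b-c-1) x)) * hCC
  · have hD2 := ((hexp.mul hpow).mul hJ2).const_mul C2
    simp only [Pi.mul_apply] at hD2
    have hEq2 : (fun y => y * W a b (c+1) y)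
        =ᶠ[𝓝 x] (fun y => C2 * (Real.exp (-y) * y ^ (a+1) * J c (a-b-c-1) y)) := by
      filter_upwards [eventually_gt_nhds hx] with y hy
      rw [hW1 y, Real.rpow_add_one hy.ne' a]
      ring
    rw [hEq2.deriv_eq, hD2.deriv, hW x, hW1 x, hxa1]
    have hCC : c * C2 = (c+b+1) * C1 := by
      rw [hC1, hC2, hΓcb, hΓc1]
      field_simp
    linear_combination (-(Real.exp (-x) * x ^ a * C2)) * hibp
      + (x * Real.exp (-x) * x ^ a * C2) * hsplit
      + (-(Real.exp (-x) * x ^ a * J (c-1) (a-b-c) x)) * hCC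
end

section
/- Let a > −1, b > −1, c > max{0, a−b} be real numbers and d ∈ {0, 1}. Then for all nonnegative integers k and n with n ≥ 2k + 1, ∫_0^∞ x^k P_n^{(d)}(x; a, b, c) W(x; a, b, c+d) dx = 0. -/
open MeasureTheory Filter Set

/-- Pochhammer symbol `(z)_k = z (z+1) ⋯ (z+k-1)`. -/
noncomputable def poch (z : ℝ) (k : ℕ) : ℝ := ∏ i ∈ Finset.range k, (z + i)

/-- The monic type II multiple orthogonal polynomial on the step line:
`P_n^{(d)}(x; a, b, c) = Σ_{j=0}^n (−1)^{n−j} C(n,j)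
  ((a+1+j)_{n−j}(b+1+j)_{n−j}/(c+b+1+⌊(n+d)/2⌋+j)_{n−j}) x^j`. -/
noncomputable def Ptype2 (d : ℕ) (a b c : ℝ) (n : ℕ) (x : ℝ) : ℝ :=
  ∑ j ∈ Finset.range (n + 1),
    (-1 : ℝ) ^ (n - j) * (n.choose j : ℝ) *
      (poch (a + 1 + j) (n - j) * poch (b + 1 + j) (n - j) /
        poch (c + b + 1 + (((n + d) / 2 : ℕ) : ℝ) + j) (n - j)) * x ^ j

/-!
Inserting the integral representation of `U` and exchanging the order of integration reduces the
moments of the weight to a Gamma and a Beta integral on `(0, ∞)`: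
`∫ x^s W(x; a, b, c) dx = (a+1)_s (b+1)_s / (c+b+1)_s`.
Writing `⌊(n+d)/2⌋ = d + k + r`, Pochhammer identities turn the `j`-th term of
`∫ x^k P_n^{(d)} W(x; a, b, c+d) dx` into a constant times
`(-1)^(n-j) C(n,j) (a+1+j)_k (b+1+j)_k (c+d+b+1+k+j)_r`. This is a polynomial of degree
`2k + r < n` in `j`, so its `n`-th finite difference, which is the whole sum, vanishes.
-/

open Real Finset Polynomial

lemma poch_pos {z : ℝ} (hz : 0 < z) (k : ℕ) : 0 < poch z k :=
  prod_pos fun i _ => by positivity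

lemma poch_one (z : ℝ) : poch z 1 = z := by
  simp [poch]

lemma poch_add (z : ℝ) (m n : ℕ) : poch z (m + n) = poch z m * poch (z + m) n := by
  simp only [poch, prod_range_add, Nat.cast_add, add_assoc]

lemma Gamma_add_nat_eq_poch_mul {z : ℝ} (hz : 0 < z) (k : ℕ) :
    Gamma (z + k) = poch z k * Gamma z := by
  induction k with
  | zero => simp [poch]
  | succ k ih =>
    rw [Nat.cast_succ, ← add_assoc, Gamma_add_one (by positivity), ih, poch_add, poch_one]
    ring

lemma poch_add_mul_poch_sub (x : ℝ) {j n : ℕ} (hj : j ≤ n) (k : ℕ) :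
    poch x (k + j) * poch (x + j) (n - j) = poch x n * poch (x + j) k := by
  conv_rhs => rw [← Nat.add_sub_cancel' hj, poch_add]
  rw [add_comm k j, poch_add]
  ring

lemma poch_eq_poch_mul_poch_mul_poch (z : ℝ) {j n : ℕ} (hj : j ≤ n) (k r : ℕ) :
    poch z (k + r + n) = poch z (k + j) * poch (z + k + j) r * poch (z + k + r + j) (n - j) := by
  rw [show k + r + n = k + j + r + (n - j) by omega, poch_add, poch_add]
  push_cast
  ring_nf

lemma poch_div_poch_mul_poch_div_poch (x y : ℝ) {z : ℝ} (hz : 0 < z) {j n : ℕ} (hj : j ≤ n)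
    (k r : ℕ) :
    poch (x + j) (n - j) * poch (y + j) (n - j) / poch (z + k + r + j) (n - j) *
        (poch x (k + j) * poch y (k + j) / poch z (k + j)) =
      poch x n * poch y n / poch z (k + r + n) *
        (poch (x + j) k * poch (y + j) k * poch (z + k + j) r) := by
  have h₁ := poch_pos hz (k + j)
  have h₂ := poch_pos (by positivity : 0 < z + k + j) r
  have h₃ := poch_pos (by positivity : 0 < z + k + r + j) (n - j)
  rw [poch_eq_poch_mul_poch_mul_poch z hj k r]
  field_simp
  linear_combination (poch y (k + j) * poch (y + j) (n - j)) * poch_add_mul_poch_sub x hj k +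
    poch x n * poch (x + j) k * poch_add_mul_poch_sub y hj k

lemma exists_natDegree_le_eval_eq_poch (z : ℝ) (k : ℕ) :
    ∃ P : ℝ[X], P.natDegree ≤ k ∧ ∀ x, P.eval x = poch (z + x) k := by
  refine ⟨∏ i ∈ range k, (X + C (z + i)), (natDegree_prod_le _ _).trans ?_, fun x => ?_⟩
  · rw [sum_congr rfl fun (i : ℕ) _ => natDegree_X_add_C (z + (i : ℝ))]
    simp
  · simp only [eval_prod, eval_add, eval_X, eval_C, poch]
    exact prod_congr rfl fun i _ => by ring

lemma sum_neg_one_pow_mul_choose_mul_eval_eq_zero {R : Type*} [CommRing R] {P : R[X]} {n : ℕ}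
    (hP : P.natDegree < n) :
    ∑ j ∈ range (n + 1), (-1) ^ (n - j) * (n.choose j : R) * P.eval (j : R) = 0 := by
  have h := congr_fun (fwdDiff_iter_eq_zero_of_degree_lt hP) 0
  rw [fwdDiff_iter_eq_sum_shift, Pi.zero_apply] at h
  rw [← h]
  refine sum_congr rfl fun j _ => ?_
  rw [zsmul_eq_mul, zero_add, nsmul_one]
  push_cast
  ring

lemma sum_neg_one_pow_mul_choose_mul_poch_eq_zero (x y z : ℝ) {k r n : ℕ}
    (h : 2 * k + r < n) :
    ∑ j ∈ range (n + 1), (-1) ^ (n - j) * (n.choose j : ℝ) *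
      (poch (x + j) k * poch (y + j) k * poch (z + j) r) = 0 := by
  obtain ⟨P, hP, hPx⟩ := exists_natDegree_le_eval_eq_poch x k
  obtain ⟨Q, hQ, hQy⟩ := exists_natDegree_le_eval_eq_poch y k
  obtain ⟨S, hS, hSz⟩ := exists_natDegree_le_eval_eq_poch z r
  have hdeg : (P * Q * S).natDegree < n := by
    have := natDegree_mul_le (p := P * Q) (q := S)
    have := natDegree_mul_le (p := P) (q := Q)
    omega
  rw [← sum_neg_one_pow_mul_choose_mul_eval_eq_zero hdeg]
  refine sum_congr rfl fun j _ => ?_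
  rw [eval_mul, eval_mul, hPx, hQy, hSz]

lemma integral_rpow_mul_exp_neg_mul {p r : ℝ} (hp : -1 < p) (hr : 0 < r) :
    ∫ x in Ioi (0 : ℝ), x ^ p * exp (-(r * x)) = Gamma (p + 1) * r ^ (-(p + 1)) := by
  have h := integral_rpow_mul_exp_neg_mul_Ioi (a := p + 1) (by linarith) hr
  rw [add_sub_cancel_right] at h
  rw [h, rpow_neg hr.le, one_div, inv_rpow hr.le, mul_comm]

lemma integrableOn_rpow_mul_exp_neg_mul {p r : ℝ} (hp : -1 < p) (hr : 0 < r) :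
    IntegrableOn (fun x : ℝ => x ^ p * exp (-(r * x))) (Ioi 0) := by
  simpa only [rpow_one, neg_mul] using integrableOn_rpow_mul_exp_neg_mul_rpow hp one_pos hr

/-- Fubini for this kernel yields the Beta integral on `(0, ∞)` (with `g t = t^(u-1)`) and the
moments of `W` (with `g` the integrand of `TricomiU`). -/
noncomputable def gammaKernel (g : ℝ → ℝ) (p x t : ℝ) : ℝ :=
  g t * (x ^ p * exp (-((1 + t) * x)))

section GammaKernel

variable {g : ℝ → ℝ} {p : ℝ}

lemma gammaKernel_nonneg (hg : ∀ t ∈ Ioi (0 : ℝ), 0 ≤ g t) {x t : ℝ} (hx : 0 ≤ x)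
    (ht : t ∈ Ioi (0 : ℝ)) : 0 ≤ gammaKernel g p x t :=
  mul_nonneg (hg t ht) (mul_nonneg (rpow_nonneg hx p) (exp_pos _).le)

lemma integral_gammaKernel_left (hp : -1 < p) {t : ℝ} (ht : t ∈ Ioi (0 : ℝ)) :
    ∫ x in Ioi (0 : ℝ), gammaKernel g p x t = g t * (Gamma (p + 1) * (1 + t) ^ (-(p + 1))) := by
  have ht' : (0 : ℝ) < 1 + t := by linarith [mem_Ioi.mp ht]
  rw [← integral_rpow_mul_exp_neg_mul hp ht', ← integral_const_mul]
  rfl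

lemma integrable_gammaKernel_iff (hg : Measurable g) (hg0 : ∀ t ∈ Ioi (0 : ℝ), 0 ≤ g t)
    (hp : -1 < p) :
    Integrable (Function.uncurry (gammaKernel g p))
        ((volume.restrict (Ioi 0)).prod (volume.restrict (Ioi 0))) ↔
      IntegrableOn (fun t => g t * (1 + t) ^ (-(p + 1))) (Ioi 0) := by
  rw [integrable_prod_iff' (by unfold gammaKernel; fun_prop)]
  have hsection : ∀ᵐ t ∂(volume.restrict (Ioi (0 : ℝ))),
      Integrable (fun x => gammaKernel g p x t) (volume.restrict (Ioi 0)) := by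
    filter_upwards [ae_restrict_mem measurableSet_Ioi] with t ht
    exact (integrableOn_rpow_mul_exp_neg_mul hp (by linarith [mem_Ioi.mp ht])).const_mul (g t)
  have hnorm : (fun t => ∫ x in Ioi (0 : ℝ), ‖gammaKernel g p x t‖) =ᵐ[volume.restrict (Ioi 0)]
      fun t => Gamma (p + 1) * (g t * (1 + t) ^ (-(p + 1))) := by
    filter_upwards [ae_restrict_mem measurableSet_Ioi] with t ht
    rw [mul_left_comm, ← integral_gammaKernel_left (g := g) hp ht]
    refine setIntegral_congr_fun measurableSet_Ioi fun x hx => ?_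
    exact Real.norm_of_nonneg (gammaKernel_nonneg hg0 (le_of_lt hx) ht)
  simp only [Function.uncurry_apply_pair, hsection, true_and, integrable_congr hnorm,
    IntegrableOn]
  exact integrable_const_mul_iff (Gamma_pos_of_pos (by linarith)).ne'.isUnit _

lemma integral_integral_gammaKernel (hp : -1 < p)
    (h : Integrable (Function.uncurry (gammaKernel g p))
      ((volume.restrict (Ioi 0)).prod (volume.restrict (Ioi 0)))) :
    ∫ x in Ioi (0 : ℝ), ∫ t in Ioi (0 : ℝ), gammaKernel g p x t =
      Gamma (p + 1) * ∫ t in Ioi (0 : ℝ), g t * (1 + t) ^ (-(p + 1)) := by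
  rw [integral_integral_swap h, ← integral_const_mul]
  refine setIntegral_congr_fun measurableSet_Ioi fun t ht => ?_
  rw [integral_gammaKernel_left hp ht]
  ring

end GammaKernel

section Beta

variable {u v : ℝ}

lemma integral_gammaKernel_rpow_right (hu : 0 < u) (p : ℝ) {x : ℝ} (hx : 0 < x) :
    ∫ t in Ioi (0 : ℝ), gammaKernel (fun t => t ^ (u - 1)) p x t =
      Gamma u * (x ^ (p - u) * exp (-(1 * x))) := by
  have hsplit : ∀ t, gammaKernel (fun t => t ^ (u - 1)) p x t =
      x ^ p * exp (-x) * (t ^ (u - 1) * exp (-(x * t))) := fun t => by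
    rw [gammaKernel, show -((1 + t) * x) = -x + -(x * t) by ring, exp_add]
    ring
  simp_rw [hsplit]
  rw [integral_const_mul, integral_rpow_mul_exp_neg_mul (by linarith) hx, sub_add_cancel,
    rpow_sub hx, rpow_neg hx.le, one_mul]
  ring

lemma integrable_gammaKernel_rpow (hu : 0 < u) (hv : 0 < v) :
    Integrable (Function.uncurry (gammaKernel (fun t => t ^ (u - 1)) (u + v - 1)))
      ((volume.restrict (Ioi 0)).prod (volume.restrict (Ioi 0))) := by
  rw [integrable_prod_iff (by unfold gammaKernel; fun_prop)]
  constructor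
  · filter_upwards [ae_restrict_mem measurableSet_Ioi] with x hx
    refine Integrable.congr (((integrableOn_rpow_mul_exp_neg_mul (p := u - 1) (by linarith)
      hx).const_mul (x ^ (u + v - 1) * exp (-x)))) (Eventually.of_forall fun t => ?_)
    simp only [Function.uncurry_apply_pair, gammaKernel]
    rw [show -((1 + t) * x) = -x + -(x * t) by ring, exp_add]
    ring
  · refine ((integrableOn_rpow_mul_exp_neg_mul (p := v - 1) (by linarith) one_pos).const_mul
      (Gamma u)).congr ?_
    filter_upwards [ae_restrict_mem measurableSet_Ioi] with x hx
    simp only [Function.uncurry_apply_pair]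
    rw [← show u + v - 1 - u = v - 1 by ring, ← integral_gammaKernel_rpow_right hu _ hx]
    refine setIntegral_congr_fun measurableSet_Ioi fun t ht => ?_
    exact (Real.norm_of_nonneg (gammaKernel_nonneg (fun t ht => rpow_nonneg (le_of_lt ht) _)
      (le_of_lt hx) ht)).symm

lemma integrableOn_rpow_mul_one_add_rpow_neg (hu : 0 < u) (hv : 0 < v) :
    IntegrableOn (fun t : ℝ => t ^ (u - 1) * (1 + t) ^ (-(u + v))) (Ioi 0) := by
  have h := (integrable_gammaKernel_iff (by fun_prop) (fun t ht => rpow_nonneg (le_of_lt ht) _)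
    (by linarith)).mp (integrable_gammaKernel_rpow hu hv)
  rwa [sub_add_cancel] at h

lemma integral_rpow_mul_one_add_rpow_neg (hu : 0 < u) (hv : 0 < v) :
    ∫ t in Ioi (0 : ℝ), t ^ (u - 1) * (1 + t) ^ (-(u + v)) = Gamma u * Gamma v / Gamma (u + v) := by
  have h := integral_integral_gammaKernel (by linarith) (integrable_gammaKernel_rpow hu hv)
  rw [setIntegral_congr_fun measurableSet_Ioi fun x hx => integral_gammaKernel_rpow_right hu _ hx,
    integral_const_mul, show u + v - 1 - u = v - 1 by ring,
    integral_rpow_mul_exp_neg_mul (by linarith) one_pos, sub_add_cancel, one_rpow, mul_one,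
    sub_add_cancel] at h
  rw [eq_div_iff (Gamma_pos_of_pos (by linarith)).ne', h, mul_comm]

end Beta

section Moments

variable {a b c : ℝ}

lemma rpow_mul_W_eq (s : ℝ) {x : ℝ} (hx : 0 < x) :
    x ^ s * W a b c x = Gamma (c + b + 1) / (Gamma (a + 1) * Gamma (b + 1) * Gamma c) *
      ∫ t in Ioi (0 : ℝ),
        gammaKernel (fun t => t ^ (c - 1) * (1 + t) ^ (a - b - c)) (a + s) x t := by
  have hsplit : ∀ t, gammaKernel (fun t => t ^ (c - 1) * (1 + t) ^ (a - b - c)) (a + s) x t =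
      x ^ s * x ^ a * exp (-x) *
        (t ^ (c - 1) * (1 + t) ^ (a - b + 1 - c - 1) * exp (-t * x)) := fun t => by
    rw [gammaKernel, show -((1 + t) * x) = -x + -t * x by ring, exp_add, rpow_add hx,
      show a - b + 1 - c - 1 = a - b - c by ring]
    ring
  simp_rw [hsplit]
  rw [integral_const_mul, W, TricomiU]
  field_simp

variable {s : ℝ}

lemma tricomi_integrand_mul_one_add_rpow_neg {t : ℝ} (ht : t ∈ Ioi (0 : ℝ)) :
    t ^ (c - 1) * (1 + t) ^ (a - b - c) * (1 + t) ^ (-(a + s + 1)) =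
      t ^ (c - 1) * (1 + t) ^ (-(c + (b + s + 1))) := by
  rw [mul_assoc, ← rpow_add (by linarith [mem_Ioi.mp ht])]
  ring_nf

lemma integrable_gammaKernel_W (has : -1 < a + s) (hbs : -1 < b + s) (hc : 0 < c) :
    Integrable (Function.uncurry
        (gammaKernel (fun t => t ^ (c - 1) * (1 + t) ^ (a - b - c)) (a + s)))
      ((volume.restrict (Ioi 0)).prod (volume.restrict (Ioi 0))) := by
  refine (integrable_gammaKernel_iff (by fun_prop) (fun t ht => ?_) has).mpr ?_
  · exact mul_nonneg (rpow_nonneg (le_of_lt ht) _)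
      (rpow_nonneg (by linarith [mem_Ioi.mp ht]) _)
  · exact (integrableOn_rpow_mul_one_add_rpow_neg hc (by linarith)).congr_fun
      (fun t ht => (tricomi_integrand_mul_one_add_rpow_neg ht).symm) measurableSet_Ioi

lemma integrableOn_rpow_mul_W (has : -1 < a + s) (hbs : -1 < b + s) (hc : 0 < c) :
    IntegrableOn (fun x => x ^ s * W a b c x) (Ioi 0) := by
  refine (((integrable_gammaKernel_W has hbs hc).integral_prod_left).const_mul
    (Gamma (c + b + 1) / (Gamma (a + 1) * Gamma (b + 1) * Gamma c))).congr ?_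
  filter_upwards [ae_restrict_mem measurableSet_Ioi] with x hx
  exact (rpow_mul_W_eq s hx).symm

lemma integral_rpow_mul_W (ha : -1 < a) (hb : -1 < b) (has : -1 < a + s) (hbs : -1 < b + s)
    (hc : 0 < c) :
    ∫ x in Ioi (0 : ℝ), x ^ s * W a b c x = Gamma (c + b + 1) * Gamma (a + s + 1) *
      Gamma (b + s + 1) / (Gamma (a + 1) * Gamma (b + 1) * Gamma (c + b + s + 1)) := by
  rw [setIntegral_congr_fun measurableSet_Ioi fun x hx => rpow_mul_W_eq s hx, integral_const_mul,
    integral_integral_gammaKernel has (integrable_gammaKernel_W has hbs hc),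
    setIntegral_congr_fun measurableSet_Ioi fun t ht => tricomi_integrand_mul_one_add_rpow_neg ht,
    integral_rpow_mul_one_add_rpow_neg hc (by linarith)]
  have := (Gamma_pos_of_pos (by linarith : 0 < a + 1)).ne'
  have := (Gamma_pos_of_pos (by linarith : 0 < b + 1)).ne'
  have := (Gamma_pos_of_pos hc).ne'
  field_simp
  ring_nf

lemma integrableOn_pow_mul_W (ha : -1 < a) (hb : -1 < b) (hc : 0 < c) (s : ℕ) :
    IntegrableOn (fun x => x ^ s * W a b c x) (Ioi 0) := by
  have hs : (0 : ℝ) ≤ s := s.cast_nonneg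
  simpa only [rpow_natCast] using
    integrableOn_rpow_mul_W (s := s) (by linarith) (by linarith) hc

lemma integral_pow_mul_W (ha : -1 < a) (hb : -1 < b) (hc : 0 < c) (s : ℕ) :
    ∫ x in Ioi (0 : ℝ), x ^ s * W a b c x =
      poch (a + 1) s * poch (b + 1) s / poch (c + b + 1) s := by
  have hs : (0 : ℝ) ≤ s := s.cast_nonneg
  simp_rw [← rpow_natCast]
  rw [integral_rpow_mul_W ha hb (by linarith) (by linarith) hc, add_right_comm a,
    add_right_comm b, add_right_comm (c + b), Gamma_add_nat_eq_poch_mul (by linarith),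
    Gamma_add_nat_eq_poch_mul (by linarith), Gamma_add_nat_eq_poch_mul (by linarith)]
  have := (Gamma_pos_of_pos (by linarith : 0 < a + 1)).ne'
  have := (Gamma_pos_of_pos (by linarith : 0 < b + 1)).ne'
  have := (Gamma_pos_of_pos (by linarith : 0 < c + b + 1)).ne'
  field_simp

end Moments

lemma integral_pow_mul_sum_mul {μ : Measure ℝ} {f : ℝ → ℝ}
    (hf : ∀ s : ℕ, Integrable (fun x => x ^ s * f x) μ) (k N : ℕ) (q : ℕ → ℝ) :
    ∫ x, x ^ k * (∑ j ∈ range N, q j * x ^ j) * f x ∂μ =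
      ∑ j ∈ range N, q j * ∫ x, x ^ (k + j) * f x ∂μ := by
  simp_rw [← integral_const_mul]
  rw [← integral_finsetSum _ fun j _ => (hf (k + j)).const_mul (q j)]
  congr 1 with x
  rw [mul_sum, sum_mul]
  exact sum_congr rfl fun j _ => by ring

theorem orthogonality_first_weight (a b c : ℝ) (ha : a > -1) (hb : b > -1)
    (hc : c > max 0 (a - b)) (d : ℕ) (hd : d ≤ 1) (k n : ℕ) (hkn : 2 * k + 1 ≤ n) :
    ∫ x in Set.Ioi (0:ℝ), x ^ k * Ptype2 d a b c n x * W a b (c + d) x = 0 := by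
  have hc0 : 0 < c := (le_max_left 0 (a - b)).trans_lt hc
  have hcd : 0 < c + d := by positivity
  have hcdb : 0 < c + d + b + 1 := by linarith
  obtain ⟨r, hm⟩ : ∃ r, (n + d) / 2 = d + k + r := ⟨(n + d) / 2 - d - k, by omega⟩
  unfold Ptype2
  rw [integral_pow_mul_sum_mul (integrableOn_pow_mul_W ha hb hcd)]
  calc _ = ∑ j ∈ range (n + 1),
        poch (a + 1) n * poch (b + 1) n / poch (c + d + b + 1) (k + r + n) *
          ((-1) ^ (n - j) * (n.choose j : ℝ) *
            (poch (a + 1 + j) k * poch (b + 1 + j) k * poch (c + d + b + 1 + k + j) r)) := by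
        refine sum_congr rfl fun j hj => ?_
        have hden : c + b + 1 + ((d + k + r : ℕ) : ℝ) + j = c + d + b + 1 + k + r + j := by
          push_cast; ring
        rw [integral_pow_mul_W ha hb hcd, hm, hden, mul_assoc,
          poch_div_poch_mul_poch_div_poch _ _ hcdb (Nat.lt_succ_iff.mp (mem_range.mp hj)) k r]
        ring
    _ = 0 := by
        rw [← mul_sum, sum_neg_one_pow_mul_choose_mul_poch_eq_zero _ _ _ (by omega), mul_zero]
end

section
/- Let n and p be positive integers, m_1, …, m_p positive integers with m := m_1 + ⋯ + m_p ≤ n, and f_1, …, f_p complex numbers with positive real part. Then Σ_{j=0}^n (−1)^j C(n,j) ∏_{i=1}^p (f_i + j)_{m_i} equals 0 if m < n, and equals (−1)^n n! if m = n. Equivalently, (f_1)_{m_1} ⋯ (f_p)_{m_p} · Σ_{j=0}^n ((−n)_j ∏_{i=1}^p (f_i+m_i)_j) / (j! ∏_{i=1}^p (f_i)_j) = (−m)_n. -/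
/-! `x ↦ ∏ i, (f i + x)_{m i}` is a monic polynomial of degree `∑ i, m i`, and the alternating
binomial sum is `(-1)^n` times its `n`-th forward difference at `0`. The `n`-th forward difference of
a polynomial of degree `d` vanishes for `d < n` and is `d!` times the leading coefficient for
`d = n`. -/

/-- Pochhammer symbol `(z)_k = z (z+1) ⋯ (z+k-1)` for complex `z`. -/
noncomputable def cpoch (z : ℂ) (k : ℕ) : ℂ := ∏ i ∈ Finset.range k, (z + i)

open Finset Polynomial
open scoped fwdDiff Nat

theorem alternating_sum_choose_mul_eq_fwdDiff_iter {R : Type*} [CommRing R] (F : R → R) (n : ℕ) :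
    ∑ j ∈ range (n + 1), (-1 : R) ^ j * n.choose j * F j = (-1) ^ n * (Δ_[1])^[n] F 0 := by
  rw [fwdDiff_iter_eq_sum_shift, mul_sum]
  refine sum_congr rfl fun j hj => ?_
  have hsign : (-1 : R) ^ n * (-1) ^ (n - j) = (-1) ^ j := by
    rw [← pow_add, show n + (n - j) = 2 * (n - j) + j by grind, pow_add, pow_mul]
    simp
  simp only [zsmul_eq_mul, nsmul_eq_mul, zero_add, mul_one]
  push_cast
  rw [← mul_assoc, ← mul_assoc, hsign]

namespace Polynomial

variable {R : Type*} [CommRing R]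

theorem alternating_sum_choose_mul_eval_eq_zero {P : R[X]} {n : ℕ} (hP : P.natDegree < n) :
    ∑ j ∈ range (n + 1), (-1 : R) ^ j * n.choose j * P.eval (j : R) = 0 := by
  rw [alternating_sum_choose_mul_eq_fwdDiff_iter P.eval, fwdDiff_iter_eq_zero_of_degree_lt hP]
  simp

theorem alternating_sum_choose_mul_eval_natDegree (P : R[X]) :
    ∑ j ∈ range (P.natDegree + 1), (-1 : R) ^ j * P.natDegree.choose j * P.eval (j : R) =
      (-1) ^ P.natDegree * P.natDegree ! * P.leadingCoeff := by
  rw [alternating_sum_choose_mul_eq_fwdDiff_iter P.eval, fwdDiff_iter_degree_eq_factorial]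
  simp only [Pi.smul_apply, Pi.natCast_apply, smul_eq_mul]
  ring

variable {ι : Type*} (s : Finset ι) (m : ι → ℕ) (f : ι → R)

theorem monic_prod_ascPochhammer_comp_X_add_C [Nontrivial R] [NoZeroDivisors R] :
    (∏ i ∈ s, (ascPochhammer R (m i)).comp (X + C (f i))).Monic :=
  monic_prod_of_monic _ _ fun i _ => (monic_ascPochhammer R (m i)).comp_X_add_C (f i)

theorem natDegree_prod_ascPochhammer_comp_X_add_C [Nontrivial R] [NoZeroDivisors R] :
    (∏ i ∈ s, (ascPochhammer R (m i)).comp (X + C (f i))).natDegree = ∑ i ∈ s, m i := by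
  rw [natDegree_prod_of_monic _ _ fun i _ => (monic_ascPochhammer R (m i)).comp_X_add_C (f i)]
  simp [natDegree_comp, ascPochhammer_natDegree]

end Polynomial

theorem cpoch_eq_eval_ascPochhammer (z : ℂ) (k : ℕ) : cpoch z k = (ascPochhammer ℂ k).eval z := by
  induction k with
  | zero => simp [cpoch]
  | succ k ih => rw [cpoch, prod_range_succ, ← cpoch, ih, ascPochhammer_succ_right]; simp

theorem hypergeometric_sum_formula_general (n p : ℕ)
    (m : Fin p → ℕ)
    (f : Fin p → ℂ) :
    (∑ i, m i < n →
      ∑ j ∈ Finset.range (n + 1),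
        (-1 : ℂ) ^ j * (n.choose j : ℂ) * ∏ i, cpoch (f i + j) (m i) = 0) ∧
    (∑ i, m i = n →
      ∑ j ∈ Finset.range (n + 1),
        (-1 : ℂ) ^ j * (n.choose j : ℂ) * ∏ i, cpoch (f i + j) (m i)
        = (-1 : ℂ) ^ n * (n.factorial : ℂ)) := by
  set P : ℂ[X] := ∏ i, (ascPochhammer ℂ (m i)).comp (X + C (f i))
  have hdeg : P.natDegree = ∑ i, m i := natDegree_prod_ascPochhammer_comp_X_add_C _ m f
  have heval (j : ℕ) : ∏ i, cpoch (f i + j) (m i) = P.eval (j : ℂ) := by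
    simp [P, eval_prod, cpoch_eq_eval_ascPochhammer, add_comm]
  simp only [heval]
  refine ⟨fun hlt => alternating_sum_choose_mul_eval_eq_zero (hdeg ▸ hlt), fun heq => ?_⟩
  rw [← heq, ← hdeg, alternating_sum_choose_mul_eval_natDegree,
    (monic_prod_ascPochhammer_comp_X_add_C _ m f).leadingCoeff, mul_one]

theorem hypergeometric_sum_formula (n p : ℕ) (hn : 1 ≤ n) (hp : 1 ≤ p)
    (m : Fin p → ℕ) (hm : ∀ i, 1 ≤ m i) (hmn : ∑ i, m i ≤ n)
    (f : Fin p → ℂ) (hf : ∀ i, 0 < (f i).re) :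
    (∑ i, m i < n →
      ∑ j ∈ Finset.range (n + 1),
        (-1 : ℂ) ^ j * (n.choose j : ℂ) * ∏ i, cpoch (f i + j) (m i) = 0) ∧
    (∑ i, m i = n →
      ∑ j ∈ Finset.range (n + 1),
        (-1 : ℂ) ^ j * (n.choose j : ℂ) * ∏ i, cpoch (f i + j) (m i)
        = (-1 : ℂ) ^ n * (n.factorial : ℂ)) :=
  hypergeometric_sum_formula_general n p m f
end

section
/- (Minton's formula.) Let n and p be positive integers, m_1, …, m_p positive integers with m := m_1 + ⋯ + m_p ≤ n, and β, f_1, …, f_p complex numbers with positive real part. Then Σ_{j=0}^n ( (−n)_j (β)_j ∏_{i=1}^p (f_i + m_i)_j ) / ( j! (β+1)_j ∏_{i=1}^p (f_i)_j ) = n! ∏_{i=1}^p (f_i − β)_{m_i} / ( (β+1)_n ∏_{i=1}^p (f_i)_{m_i} ). -/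
open Finset Polynomial

lemma cpoch_ne_zero' {z : ℂ} {k : ℕ} (h : ∀ i < k, z + (i:ℂ) ≠ 0) : cpoch z k ≠ 0 :=
  Finset.prod_ne_zero_iff.2 fun i hi => h i (mem_range.mp hi)

lemma cpoch_ne_zero {z : ℂ} (hz : 0 < z.re) (k : ℕ) : cpoch z k ≠ 0 := by
  refine cpoch_ne_zero' fun i _ hzi => ?_
  have : (z + (i:ℂ)).re = 0 := by rw [hzi]; simp
  rw [Complex.add_re, Complex.natCast_re] at this
  have : (0:ℝ) ≤ (i:ℝ) := Nat.cast_nonneg i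
  linarith

lemma cpoch_add (z : ℂ) (a b : ℕ) : cpoch z (a + b) = cpoch z a * cpoch (z + a) b := by
  unfold cpoch
  rw [Finset.prod_range_add]
  congr 1
  exact Finset.prod_congr rfl fun i _ => by push_cast; ring

lemma cpoch_succ (z : ℂ) (k : ℕ) : cpoch z (k+1) = cpoch z k * (z + k) := by
  unfold cpoch; rw [Finset.prod_range_succ]

lemma cpoch_succ' (z : ℂ) (k : ℕ) : cpoch z (k+1) = z * cpoch (z + 1) k := by
  have := cpoch_add z 1 k
  rw [Nat.add_comm 1 k] at this
  simpa [cpoch] using this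

lemma cpoch_swap (f : ℂ) (mm j : ℕ) :
    cpoch (f + mm) j * cpoch f mm = cpoch f j * cpoch (f + j) mm := by
  rw [mul_comm (cpoch (f + mm) j), ← cpoch_add, ← cpoch_add, Nat.add_comm]

lemma cpoch_neg_nat {n j : ℕ} (h : j ≤ n) :
    cpoch (-(n:ℂ)) j = (-1)^j * (j.factorial : ℂ) * (n.choose j) := by
  have : cpoch (-(n:ℂ)) j = (-1)^j * ((n.descFactorial j : ℕ) : ℂ) := by
    unfold cpoch
    rw [Nat.descFactorial_eq_prod_range]
    rw [Finset.prod_congr rfl (g := fun i => -(((n - i : ℕ)):ℂ))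
      (fun i hi => by
        rw [Nat.cast_sub (le_of_lt (lt_of_lt_of_le (mem_range.mp hi) h))]; ring)]
    rw [Finset.prod_congr rfl (g := fun i => (-1) * (((n - i : ℕ)):ℂ))
      (fun i _ => by ring), Finset.prod_mul_distrib]
    simp [Nat.cast_prod]
  rw [this, Nat.descFactorial_eq_factorial_mul_choose]
  push_cast; ring

lemma alt_split (n : ℕ) (g : ℕ → ℂ) :
    ∑ j ∈ range (n+2), (-1:ℂ)^j * ((n+1).choose j) * g j
    = ∑ j ∈ range (n+1), (-1:ℂ)^j * (n.choose j) * g j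
      - ∑ j ∈ range (n+1), (-1:ℂ)^j * (n.choose j) * g (j+1) := by
  conv_lhs => rw [Finset.sum_range_succ' _ (n+1)]
  nth_rewrite 2 [Finset.sum_range_succ' _ n]
  have h1 : ∀ j ∈ range (n+1), (-1:ℂ)^(j+1) * ((n+1).choose (j+1)) * g (j+1)
      = -((-1:ℂ)^j * (n.choose j) * g (j+1)) + -((-1:ℂ)^j * (n.choose (j+1)) * g (j+1)) := by
    intro j _
    rw [Nat.choose_succ_succ]
    push_cast
    ring
  rw [Finset.sum_congr rfl h1, Finset.sum_add_distrib]
  have h2 : ∑ j ∈ range (n+1), -((-1:ℂ)^j * (n.choose (j+1)) * g (j+1))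
      = ∑ j ∈ range n, -((-1:ℂ)^j * (n.choose (j+1)) * g (j+1)) := by
    rw [Finset.sum_range_succ]
    simp
  rw [h2]
  have h3 : ∑ j ∈ range n, (-1:ℂ)^(j+1) * (n.choose (j+1)) * g (j+1)
      = ∑ j ∈ range n, -((-1:ℂ)^j * (n.choose (j+1)) * g (j+1)) :=
    Finset.sum_congr rfl fun j _ => by ring
  rw [h3]
  simp
  ring

lemma alt_sum_inv (n : ℕ) : ∀ β : ℂ, (∀ j : ℕ, j ≤ n → β + j ≠ 0) →
    ∑ j ∈ range (n+1), (-1:ℂ)^j * (n.choose j) / (β + j)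
    = n.factorial / cpoch β (n+1) := by
  induction n with
  | zero => intro β hβ; simp [cpoch]
  | succ n ih =>
    intro β hβ
    have hsplit := alt_split n (fun j => 1 / (β + j))
    have hL : ∑ j ∈ range (n+2), (-1:ℂ)^j * ((n+1).choose j) / (β + j)
        = ∑ j ∈ range (n+2), (-1:ℂ)^j * ((n+1).choose j) * (1/(β + j)) :=
      Finset.sum_congr rfl fun j _ => by ring
    have h1 : ∑ j ∈ range (n+1), (-1:ℂ)^j * (n.choose j) * (1/(β + j))
        = n.factorial / cpoch β (n+1) := by
      rw [← ih β (fun j hj => hβ j (le_trans hj (Nat.le_succ n)))]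
      exact Finset.sum_congr rfl fun j _ => by ring
    have h2 : ∑ j ∈ range (n+1), (-1:ℂ)^j * (n.choose j) * (1/(β + (j+1:ℕ)))
        = n.factorial / cpoch (β+1) (n+1) := by
      rw [← ih (β+1) (fun j hj => by
        have := hβ (j+1) (Nat.succ_le_succ hj)
        push_cast at this
        rw [show β + 1 + (j:ℂ) = β + ((j:ℂ) + 1) by ring]
        exact this)]
      exact Finset.sum_congr rfl fun j _ => by
        push_cast; ring_nf
    rw [hL, hsplit, h1, h2]
    have hb0 : β ≠ 0 := by simpa using hβ 0 (Nat.zero_le _)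
    have hc1 : cpoch (β+1) n ≠ 0 := cpoch_ne_zero' fun i hi => by
      have := hβ (i+1) (by omega); push_cast at this
      rw [show β + 1 + (i:ℂ) = β + ((i:ℂ) + 1) by ring]
      exact this
    have hc2 : (β + 1 + n) ≠ 0 := by
      have := hβ (n+1) (le_refl _); push_cast at this
      rw [show β + 1 + (n:ℂ) = β + ((n:ℂ) + 1) by ring]
      exact this
    rw [cpoch_succ' β (n+1), cpoch_succ (β+1) n, cpoch_succ' β n]
    rw [Nat.factorial_succ]
    field_simp
    push_cast
    ring

lemma alt_sum_poly (n : ℕ) : ∀ R : Polynomial ℂ, (R = 0 ∨ R.natDegree < n) →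
    ∑ j ∈ range (n+1), (-1:ℂ)^j * (n.choose j) * R.eval (j:ℂ) = 0 := by
  induction n with
  | zero =>
    rintro R (rfl | hR)
    · simp
    · omega
  | succ n ih =>
    rintro R (rfl | hR)
    · simp
    set S := R - R.comp (X + 1) with hS
    have heval : ∀ j : ℕ, S.eval (j:ℂ) = R.eval (j:ℂ) - R.eval ((j:ℂ)+1) := by
      intro j
      simp [hS, eval_comp]
    have hsplit := alt_split n (fun j => R.eval (j:ℂ))
    have key : ∑ j ∈ range (n+2), (-1:ℂ)^j * ((n+1).choose j) * R.eval (j:ℂ)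
        = ∑ j ∈ range (n+1), (-1:ℂ)^j * (n.choose j) * S.eval (j:ℂ) := by
      rw [hsplit, ← Finset.sum_sub_distrib]
      exact (Finset.sum_congr rfl fun j _ => by rw [heval]; push_cast; ring).symm
    rw [key]
    apply ih
    by_cases hS0 : S = 0
    · exact Or.inl hS0
    right
    by_cases hR0 : R = 0
    · exfalso; apply hS0; simp [hS, hR0]
    have hm : (X + 1 : Polynomial ℂ).Monic := by
      simpa using monic_X_add_C (1:ℂ)
    have hnd1 : (X + 1 : Polynomial ℂ).natDegree = 1 := by
      rw [show (X + 1 : Polynomial ℂ) = X + C 1 by simp, natDegree_X_add_C]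
    have hcomp : (R.comp (X + 1)).natDegree = R.natDegree := by
      rw [natDegree_comp, hnd1, mul_one]
    have hlc : R.leadingCoeff = (R.comp (X + 1)).leadingCoeff := by
      rw [leadingCoeff_comp (by rw [hnd1]; norm_num), hm.leadingCoeff, one_pow, mul_one]
    have hdeg : S.degree < R.degree := by
      apply degree_sub_lt _ hR0 hlc
      rw [degree_eq_natDegree hR0, degree_eq_natDegree (fun h => hR0 (by
        -- comp = 0 → R = 0
        have : R.natDegree = 0 := by rw [← hcomp, h]; simp
        -- leadingCoeff of comp = leadingCoeff R ≠ 0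
        have h2 : R.leadingCoeff = 0 := by rw [hlc, h]; simp
        exact leadingCoeff_eq_zero.mp h2)), hcomp]
    have : S.natDegree < R.natDegree := natDegree_lt_natDegree hS0 hdeg
    omega

lemma alt_sum_poly_div (n : ℕ) (β : ℂ) (hβ : ∀ j : ℕ, j ≤ n → β + j ≠ 0)
    (P : Polynomial ℂ) (hP : P.natDegree ≤ n) :
    ∑ j ∈ range (n+1), (-1:ℂ)^j * (n.choose j) * P.eval (j:ℂ) / (β + j)
    = P.eval (-β) * n.factorial / cpoch β (n+1) := by
  obtain ⟨R, hR⟩ : (X - C (-β)) ∣ (P - C (P.eval (-β))) :=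
    Polynomial.dvd_iff_isRoot.2 (by simp [Polynomial.IsRoot])
  have hXC : (X - C (-β)) = (X + C β : Polynomial ℂ) := by rw [map_neg, sub_neg_eq_add]
  have hPj : ∀ j : ℕ, P.eval (j:ℂ) = P.eval (-β) + (β + j) * R.eval (j:ℂ) := by
    intro j
    have := congrArg (Polynomial.eval (j:ℂ)) hR
    rw [hXC] at this
    simp only [eval_sub, eval_mul, eval_add, eval_C, eval_X] at this
    linear_combination this
  have hdR : R = 0 ∨ R.natDegree < n := by
    by_cases hR0 : R = 0
    · exact Or.inl hR0
    right
    by_cases hQ0 : P - C (P.eval (-β)) = 0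
    · exfalso
      apply hR0
      have h := hR
      rw [hQ0] at h
      exact (mul_eq_zero.mp h.symm).resolve_left (X_sub_C_ne_zero _)
    have h1 : (P - C (P.eval (-β))).natDegree = 1 + R.natDegree := by
      rw [hR, natDegree_mul (X_sub_C_ne_zero _) hR0, natDegree_X_sub_C]
    have h2 : (P - C (P.eval (-β))).natDegree ≤ n := by
      refine le_trans (natDegree_sub_le _ _) ?_
      simp [hP]
    omega
  have hterm : ∀ j ∈ range (n+1), (-1:ℂ)^j * (n.choose j) * P.eval (j:ℂ) / (β + j)
      = P.eval (-β) * ((-1:ℂ)^j * (n.choose j) / (β + j))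
        + (-1:ℂ)^j * (n.choose j) * R.eval (j:ℂ) := by
    intro j hj
    rw [hPj j]
    have hb := hβ j (by have := mem_range.mp hj; omega)
    field_simp
  rw [Finset.sum_congr rfl hterm, Finset.sum_add_distrib, ← Finset.mul_sum,
    alt_sum_inv n β hβ, alt_sum_poly n R hdR, add_zero, mul_div_assoc]

lemma cpoch_cross (z : ℂ) (j : ℕ) : cpoch z j * (z + j) = z * cpoch (z + 1) j := by
  rw [← cpoch_succ, cpoch_succ']

/-- Minton's formula. -/
theorem minton_formula (n p : ℕ) (hn : 1 ≤ n) (hp : 1 ≤ p)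
    (m : Fin p → ℕ) (hm : ∀ i, 1 ≤ m i) (hmn : ∑ i, m i ≤ n)
    (β : ℂ) (hβ : 0 < β.re) (f : Fin p → ℂ) (hf : ∀ i, 0 < (f i).re) :
    ∑ j ∈ Finset.range (n + 1),
      cpoch (-(n : ℂ)) j * cpoch β j * (∏ i, cpoch (f i + m i) j) /
        ((j.factorial : ℂ) * cpoch (β + 1) j * ∏ i, cpoch (f i) j)
    = (n.factorial : ℂ) * (∏ i, cpoch (f i - β) (m i)) /
        (cpoch (β + 1) n * ∏ i, cpoch (f i) (m i)) := by
  set D : ℂ := ∏ i, cpoch (f i) (m i) with hD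
  set P : Polynomial ℂ := ∏ i, ∏ k ∈ range (m i), (X + C (f i + k)) with hPdef
  have hβ' : ∀ j : ℕ, j ≤ n → β + (j:ℂ) ≠ 0 := by
    intro j _ h
    have : (β + (j:ℂ)).re = 0 := by rw [h]; simp
    rw [Complex.add_re, Complex.natCast_re] at this
    have : (0:ℝ) ≤ (j:ℝ) := Nat.cast_nonneg j
    linarith
  have hβ1 : (0:ℝ) < (β+1).re := by rw [Complex.add_re, Complex.one_re]; linarith
  have hPeval : ∀ x : ℂ, P.eval x = ∏ i, ∏ k ∈ range (m i), (x + (f i + k)) := by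
    intro x
    rw [hPdef]
    rw [Polynomial.eval_prod]
    refine Finset.prod_congr rfl fun i _ => ?_
    rw [Polynomial.eval_prod]
    exact Finset.prod_congr rfl fun k _ => by simp
  have hPj : ∀ j : ℕ, P.eval (j:ℂ) = ∏ i, cpoch (f i + j) (m i) := by
    intro j
    rw [hPeval]
    refine Finset.prod_congr rfl fun i _ => ?_
    unfold cpoch
    exact Finset.prod_congr rfl fun k _ => by ring
  have hPb : P.eval (-β) = ∏ i, cpoch (f i - β) (m i) := by
    rw [hPeval]
    refine Finset.prod_congr rfl fun i _ => ?_
    unfold cpoch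
    exact Finset.prod_congr rfl fun k _ => by ring
  have hPdeg : P.natDegree ≤ n := by
    have h1 : P.natDegree = ∑ i, (∏ k ∈ range (m i), (X + C (f i + k)) : Polynomial ℂ).natDegree := by
      rw [hPdef]
      exact Polynomial.natDegree_prod _ _ fun i _ =>
        (monic_prod_of_monic _ _ fun k _ => monic_X_add_C _).ne_zero
    have h2 : ∀ i : Fin p, (∏ k ∈ range (m i), (X + C (f i + k)) : Polynomial ℂ).natDegree = m i := by
      intro i
      rw [Polynomial.natDegree_prod _ _ fun k _ => (monic_X_add_C _).ne_zero]
      have : ∑ k ∈ range (m i), (X + C (f i + (k:ℂ))).natDegree = ∑ k ∈ range (m i), 1 :=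
        Finset.sum_congr rfl fun k _ => natDegree_X_add_C _
      rw [this]
      simp
    rw [h1, Finset.sum_congr rfl fun i _ => h2 i]
    exact hmn
  have hDne : D ≠ 0 := Finset.prod_ne_zero_iff.2 fun i _ => cpoch_ne_zero (hf i) _
  have hterm : ∀ j ∈ range (n+1),
      cpoch (-(n : ℂ)) j * cpoch β j * (∏ i, cpoch (f i + m i) j) /
        ((j.factorial : ℂ) * cpoch (β + 1) j * ∏ i, cpoch (f i) j)
      = (β / D) * ((-1:ℂ)^j * (n.choose j) * P.eval (j:ℂ) / (β + j)) := by
    intro j hj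
    have hjn : j ≤ n := by have := mem_range.mp hj; omega
    have hBne : ((j.factorial : ℂ) * cpoch (β + 1) j * ∏ i, cpoch (f i) j) ≠ 0 :=
      mul_ne_zero (mul_ne_zero (Nat.cast_ne_zero.2 j.factorial_ne_zero)
        (cpoch_ne_zero hβ1 j)) (Finset.prod_ne_zero_iff.2 fun i _ => cpoch_ne_zero (hf i) _)
    have hbj : β + (j:ℂ) ≠ 0 := hβ' j hjn
    rw [div_mul_div_comm, div_eq_div_iff hBne (mul_ne_zero hDne hbj)]
    rw [cpoch_neg_nat hjn, hPj j]
    have hswap : (∏ i, cpoch (f i + m i) j) * D = (∏ i, cpoch (f i) j) * ∏ i, cpoch (f i + j) (m i) := by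
      rw [hD, ← Finset.prod_mul_distrib, ← Finset.prod_mul_distrib]
      exact Finset.prod_congr rfl fun i _ => cpoch_swap (f i) (m i) j
    calc (-1:ℂ)^j * (j.factorial : ℂ) * (n.choose j) * cpoch β j * (∏ i, cpoch (f i + m i) j) * (D * (β + j))
        = ((-1:ℂ)^j * (j.factorial : ℂ) * (n.choose j)) * (cpoch β j * (β + j)) * ((∏ i, cpoch (f i + m i) j) * D) := by ring
      _ = ((-1:ℂ)^j * (j.factorial : ℂ) * (n.choose j)) * (β * cpoch (β+1) j) * ((∏ i, cpoch (f i) j) * ∏ i, cpoch (f i + j) (m i)) := by rw [cpoch_cross, hswap]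
      _ = β * ((-1:ℂ)^j * (n.choose j) * ∏ i, cpoch (f i + j) (m i)) * ((j.factorial : ℂ) * cpoch (β + 1) j * ∏ i, cpoch (f i) j) := by ring
  rw [Finset.sum_congr rfl hterm, ← Finset.mul_sum,
    alt_sum_poly_div n β hβ' P hPdeg, hPb, cpoch_succ' β n]
  have hbne : β ≠ 0 := fun h => by simp [h] at hβ
  have hc1 : cpoch (β+1) n ≠ 0 := cpoch_ne_zero hβ1 n
  field_simp
end

section
/- Let a > −1, b > −1, c > max{0, a−b} be real numbers and d ∈ {0, 1}. Then for every nonnegative integer n and every real x, (d/dx) P_{n+1}^{(d)}(x; a, b, c) = (n+1) P_n^{(1−d)}(x; a+1, b+1, c+d). (The sequence of derivatives of the type II multiple orthogonal polynomials on the step line is again such a sequence, with shifted parameters and with the roles of the two weights interchanged; in particular these polynomials are Hahn-classical.) -/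
/-!
Differentiating term by term, the coefficient of `x^j` in `P'_{n+1}` is `(j+1)` times the
coefficient of `x^{j+1}` in `P_{n+1}`. The factor `(j+1) C(n+1, j+1) = (n+1) C(n, j)` produces
`n+1`, the Pochhammer symbols `(a+1+(j+1))_{n-j}` and `(b+1+(j+1))_{n-j}` are those of the
parameters `a+1`, `b+1`, and the denominator matches because `⌊(n+1+d)/2⌋ = d + ⌊(n+1-d)/2⌋`
for `d ∈ {0,1}`, which is absorbed by `c ↦ c+d`.
-/

open Finset

theorem deriv_sum_range_succ_mul_pow {𝕜 : Type*} [NontriviallyNormedField 𝕜]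
    (f : ℕ → 𝕜) (m : ℕ) (x : 𝕜) :
    deriv (fun y => ∑ j ∈ range (m + 1), f j * y ^ j) x
      = ∑ j ∈ range m, ((j : 𝕜) + 1) * f (j + 1) * x ^ j := by
  have hderiv := HasDerivAt.fun_sum (u := range (m + 1))
    fun j _ => (hasDerivAt_pow j x).const_mul (f j)
  rw [hderiv.deriv, sum_range_succ']
  simp only [Nat.cast_zero, zero_mul, mul_zero, add_zero, Nat.cast_add, Nat.cast_one,
    Nat.add_sub_cancel]
  exact sum_congr rfl fun j _ => by ring

noncomputable def Ptype2Coeff (d : ℕ) (a b c : ℝ) (n j : ℕ) : ℝ :=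
  (-1 : ℝ) ^ (n - j) * (n.choose j : ℝ) *
    (poch (a + 1 + j) (n - j) * poch (b + 1 + j) (n - j) /
      poch (c + b + 1 + (((n + d) / 2 : ℕ) : ℝ) + j) (n - j))

theorem Ptype2_eq_sum_coeff (d : ℕ) (a b c : ℝ) (n : ℕ) (x : ℝ) :
    Ptype2 d a b c n x = ∑ j ∈ range (n + 1), Ptype2Coeff d a b c n j * x ^ j :=
  rfl

theorem succ_mul_Ptype2Coeff_succ (a b c : ℝ) {d : ℕ} (hd : d ≤ 1) (n j : ℕ) :
    ((j : ℝ) + 1) * Ptype2Coeff d a b c (n + 1) (j + 1)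
      = (n + 1) * Ptype2Coeff (1 - d) (a + 1) (b + 1) (c + d) n j := by
  have hchoose : ((j : ℝ) + 1) * ((n + 1).choose (j + 1) : ℝ) = ((n : ℝ) + 1) * n.choose j := by
    rw [mul_comm]
    exact_mod_cast (Nat.add_one_mul_choose_eq n j).symm
  have hfloor : (n + 1 + d) / 2 = d + (n + (1 - d)) / 2 := by omega
  have hshift_a : a + 1 + ((j + 1 : ℕ) : ℝ) = (a + 1) + 1 + j := by push_cast; ring
  have hshift_b : b + 1 + ((j + 1 : ℕ) : ℝ) = (b + 1) + 1 + j := by push_cast; ring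
  have hshift_c : c + b + 1 + (((n + 1 + d) / 2 : ℕ) : ℝ) + ((j + 1 : ℕ) : ℝ)
      = (c + d) + (b + 1) + 1 + (((n + (1 - d)) / 2 : ℕ) : ℝ) + j := by
    rw [hfloor]; push_cast; ring
  unfold Ptype2Coeff
  rw [Nat.add_sub_add_right, hshift_a, hshift_b, hshift_c]
  linear_combination (-1 : ℝ) ^ (n - j) *
    (poch ((a + 1) + 1 + j) (n - j) * poch ((b + 1) + 1 + j) (n - j) /
      poch ((c + d) + (b + 1) + 1 + (((n + (1 - d)) / 2 : ℕ) : ℝ) + j) (n - j)) * hchoose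

theorem deriv_Ptype2_general (a b c : ℝ) (d : ℕ) (hd : d ≤ 1) (n : ℕ) (x : ℝ) :
    deriv (fun y => Ptype2 d a b c (n + 1) y) x
      = (n + 1) * Ptype2 (1 - d) (a + 1) (b + 1) (c + d) n x := by
  simp only [Ptype2_eq_sum_coeff]
  rw [deriv_sum_range_succ_mul_pow, mul_sum]
  refine sum_congr rfl fun j _ => ?_
  rw [succ_mul_Ptype2Coeff_succ a b c hd, mul_assoc]

theorem deriv_Ptype2 (a b c : ℝ) (ha : a > -1) (hb : b > -1)
    (hc : c > max 0 (a - b)) (d : ℕ) (hd : d ≤ 1) (n : ℕ) (x : ℝ) :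
    deriv (fun y => Ptype2 d a b c (n + 1) y) x
      = (n + 1) * Ptype2 (1 - d) (a + 1) (b + 1) (c + d) n x :=
  deriv_Ptype2_general a b c d hd n x
end

section
/- Let a > −1, b > −1, c > max{0, a−b} be real numbers, d ∈ {0, 1} and n a nonnegative integer. Then the polynomial P_n^{(d)}(x) = P_n^{(d)}(x; a, b, c) satisfies, for all real x, the third-order differential equation x² P_n^{(d)}'''(x) − x (x − (a+b+3)) P_n^{(d)}''(x) + ( (⌊(n+1−d)/2⌋ − (c+b+2)) x + (a+1)(b+1) ) P_n^{(d)}'(x) + n (c+b+1+⌊(n+d)/2⌋) P_n^{(d)}(x) = 0. -/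
/-! `P_n^{(d)}` is a multiple of the terminating hypergeometric series
`₂F₂(-n, γ; a + 1, b + 1; x)` with `γ = c + b + 1 + ⌊(n + d)/2⌋`: its coefficients satisfy
`(j + 1)(j + 1 + a)(j + 1 + b) c_{j+1} = (j - n)(j + γ) c_j`. For the Euler operator
`θ = x d/dx` this recurrence says exactly `d/dx (θ + a)(θ + b) P = (θ - n)(θ + γ) P`, and
expanding the operators gives the stated equation, because
`⌊(n + 1 - d)/2⌋ = n - ⌊(n + d)/2⌋` for `d ≤ 1`. -/

open Polynomial

namespace Polynomial

variable {R : Type*} [CommSemiring R]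

noncomputable def eulerOp (p : R[X]) : R[X] := X * derivative p

@[simp] lemma coeff_eulerOp (p : R[X]) (m : ℕ) : (eulerOp p).coeff m = m * p.coeff m := by
  cases m with
  | zero => simp [eulerOp]
  | succ m => rw [eulerOp, coeff_X_mul, coeff_derivative, mul_comm]; push_cast; rfl

end Polynomial

section HypergeometricEquation

variable {R : Type*} [CommRing R] {a b γ N : R} {p : R[X]}

theorem derivative_eulerOp_eq_of_coeff_rec
    (h : ∀ j : ℕ, ((j : R) + 1) * (j + 1 + a) * (j + 1 + b) * p.coeff (j + 1)
      = (j - N) * (j + γ) * p.coeff j) :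
    derivative (eulerOp (eulerOp p + C b * p) + C a * (eulerOp p + C b * p))
      = eulerOp (eulerOp p + C γ * p) - C N * (eulerOp p + C γ * p) := by
  ext m
  simp only [coeff_derivative, coeff_add, coeff_sub, coeff_eulerOp, coeff_C_mul]
  push_cast
  linear_combination h m

theorem hypergeometric_ode_of_coeff_rec
    (h : ∀ j : ℕ, ((j : R) + 1) * (j + 1 + a) * (j + 1 + b) * p.coeff (j + 1)
      = (j - N) * (j + γ) * p.coeff j) (x : R) :
    x ^ 2 * (derivative^[3] p).eval x - x * (x - (a + b + 3)) * (derivative^[2] p).eval x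
      + ((N - γ - 1) * x + (a + 1) * (b + 1)) * (derivative p).eval x
      + N * γ * p.eval x = 0 := by
  have h := congrArg (eval x) (derivative_eulerOp_eq_of_coeff_rec h)
  simp only [eulerOp, derivative_mul, derivative_add, derivative_X, derivative_C, derivative_one,
    derivative_zero, eval_add, eval_sub, eval_mul, eval_C, eval_X, eval_one, eval_zero] at h
  simp only [Function.iterate_succ_apply', Function.iterate_zero_apply]
  linear_combination h

end HypergeometricEquation

theorem iterate_deriv_eval {𝕜 : Type*} [NontriviallyNormedField 𝕜] (p : 𝕜[X]) (k : ℕ) :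
    deriv^[k] (fun x => p.eval x) = fun x => (derivative^[k] p).eval x := by
  induction k generalizing p with
  | zero => rfl
  | succ k ih =>
    rw [Function.iterate_succ_apply, Function.iterate_succ_apply, ← ih]
    exact congrArg _ (funext fun x => Polynomial.deriv p)

lemma poch_succ (z : ℝ) (k : ℕ) : poch z (k + 1) = z * poch (z + 1) k := by
  rw [poch, poch, Finset.prod_range_succ', Nat.cast_zero, add_zero, mul_comm]
  congr 1
  exact Finset.prod_congr rfl fun i _ => by push_cast; ring

section Coefficients

variable (a b γ : ℝ) (n : ℕ)

noncomputable def ptype2Coeff (j : ℕ) : ℝ :=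
  (-1 : ℝ) ^ (n - j) * (n.choose j : ℝ) *
    (poch (a + 1 + j) (n - j) * poch (b + 1 + j) (n - j) / poch (γ + j) (n - j))

noncomputable def ptype2Poly : ℝ[X] :=
  ∑ j ∈ Finset.range (n + 1), C (ptype2Coeff a b γ n j) * X ^ j

variable {n} in
lemma ptype2Coeff_of_lt {j : ℕ} (h : n < j) : ptype2Coeff a b γ n j = 0 := by
  simp [ptype2Coeff, Nat.choose_eq_zero_of_lt h]

lemma coeff_ptype2Poly (j : ℕ) : (ptype2Poly a b γ n).coeff j = ptype2Coeff a b γ n j := by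
  simp only [ptype2Poly, finsetSum_coeff, coeff_C_mul_X_pow, Finset.sum_ite_eq, Finset.mem_range]
  split_ifs with h
  · rfl
  · exact (ptype2Coeff_of_lt a b γ (by omega)).symm

variable {a b γ n} in
lemma ptype2Coeff_rec (hγ : ∀ j : ℕ, γ + j ≠ 0) (j : ℕ) :
    ((j : ℝ) + 1) * (j + 1 + a) * (j + 1 + b) * ptype2Coeff a b γ n (j + 1)
      = (j - n) * (j + γ) * ptype2Coeff a b γ n j := by
  rcases lt_trichotomy j n with hj | rfl | hj
  · obtain ⟨m, hm⟩ : ∃ m, n - j = m + 1 := ⟨n - j - 1, by omega⟩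
    have hm' : n - (j + 1) = m := by omega
    have hn : (n : ℝ) = j + 1 + m := by exact_mod_cast (by omega : n = j + 1 + m)
    have hch : (n.choose (j + 1) : ℝ) * (j + 1) = n.choose j * (m + 1) := by
      exact_mod_cast hm ▸ Nat.choose_succ_right_eq n j
    set Q :=
      poch (a + 1 + (j + 1 : ℕ)) m * poch (b + 1 + (j + 1 : ℕ)) m / poch (γ + (j + 1 : ℕ)) m
    have hpoch : poch (a + 1 + j) (m + 1) * poch (b + 1 + j) (m + 1) / poch (γ + j) (m + 1)
        = (a + 1 + j) * (b + 1 + j) / (γ + j) * Q := by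
      rw [poch_succ, poch_succ, poch_succ, mul_mul_mul_comm, mul_div_mul_comm]
      simp only [Q, Nat.cast_succ, add_assoc]
    have hcj : ptype2Coeff a b γ n j
        = -(-1) ^ m * n.choose j * ((a + 1 + j) * (b + 1 + j) / (γ + j) * Q) := by
      rw [ptype2Coeff, hm, hpoch, pow_succ, mul_neg_one]
    have hcj' : ptype2Coeff a b γ n (j + 1) = (-1) ^ m * n.choose (j + 1) * Q := by
      rw [ptype2Coeff, hm']
    have hγj := hγ j
    clear_value Q
    rw [hcj, hcj']
    field_simp
    rw [hn]
    linear_combination (a + 1 + j) * (b + 1 + j) * (γ + j) * Q * hch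
  · simp [ptype2Coeff_of_lt a b γ (Nat.lt_succ_self j)]
  · simp [ptype2Coeff_of_lt a b γ hj, ptype2Coeff_of_lt a b γ (Nat.lt_succ_of_lt hj)]

end Coefficients

lemma Ptype2_eq_eval (d : ℕ) (a b c : ℝ) (n : ℕ) :
    Ptype2 d a b c n = fun x => (ptype2Poly a b (c + b + 1 + ((n + d) / 2 : ℕ)) n).eval x := by
  funext x
  simp only [Ptype2, ptype2Poly, ptype2Coeff, eval_finsetSum, eval_mul, eval_C, eval_pow, eval_X]

theorem third_order_ODE_general (a b c : ℝ) (hb : b > -1)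
    (hc : c > max 0 (a - b)) (d : ℕ) (hd : d ≤ 1) (n : ℕ) (x : ℝ) :
    x ^ 2 * deriv^[3] (Ptype2 d a b c n) x
      - x * (x - (a + b + 3)) * deriv^[2] (Ptype2 d a b c n) x
      + (((((n + 1 - d) / 2 : ℕ) : ℝ) - (c + b + 2)) * x + (a + 1) * (b + 1)) *
          deriv (Ptype2 d a b c n) x
      + n * (c + b + 1 + (((n + d) / 2 : ℕ) : ℝ)) * Ptype2 d a b c n x = 0 := by
  set k := (n + d) / 2
  set γ : ℝ := c + b + 1 + k
  have hγ (j : ℕ) : γ + j ≠ 0 := by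
    have : 0 < c := (le_max_left _ _).trans_lt hc
    have : (0 : ℝ) ≤ k + j := by positivity
    linarith
  have hk : (((n + 1 - d) / 2 : ℕ) : ℝ) - (c + b + 2) = n - γ - 1 := by
    have : (((n + 1 - d) / 2 : ℕ) : ℝ) + k = n := by
      exact_mod_cast (by omega : (n + 1 - d) / 2 + k = n)
    linarith
  rw [Ptype2_eq_eval, iterate_deriv_eval, iterate_deriv_eval, Polynomial.deriv, hk]
  refine hypergeometric_ode_of_coeff_rec (fun j => ?_) x
  simpa only [coeff_ptype2Poly] using ptype2Coeff_rec hγ j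

theorem third_order_ODE (a b c : ℝ) (ha : a > -1) (hb : b > -1)
    (hc : c > max 0 (a - b)) (d : ℕ) (hd : d ≤ 1) (n : ℕ) (x : ℝ) :
    x ^ 2 * deriv^[3] (Ptype2 d a b c n) x
      - x * (x - (a + b + 3)) * deriv^[2] (Ptype2 d a b c n) x
      + (((((n + 1 - d) / 2 : ℕ) : ℝ) - (c + b + 2)) * x + (a + 1) * (b + 1)) *
          deriv (Ptype2 d a b c n) x
      + n * (c + b + 1 + (((n + d) / 2 : ℕ) : ℝ)) * Ptype2 d a b c n x = 0 :=
  third_order_ODE_general a b c hb hc d hd n x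
end

section
/- Let a > −1, b > −1, c > max{0, a−b} be real numbers and d ∈ {0, 1}. With the recurrence coefficients β_n^{(d)}, α_n^{(d)}, γ_n^{(d)} defined as in the recurrence relation for P_n^{(d)}(·; a, b, c), the following limits hold as m → ∞: β_{2m+d}^{(d)}(a,b,c)/m → 28/9, β_{2m+d}^{(1−d)}(a,b,c)/m → 20/9, α_{2m+d}^{(d)}(a,b,c)/m² → 208/81, γ_{2m+d}^{(d)}(a,b,c)/m³ → 64/729, and γ_{2m+d}^{(1−d)}(a,b,c)/m³ → 64/27. (The recurrence coefficients are unbounded and asymptotically 2-periodic.) -/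
/-- β coefficient `β_{2m+e}^{(e)}(a,b,c)` (superscript matching the parity of the index). -/
noncomputable def betaSame (a b c m e : ℝ) : ℝ :=
  (2*m+e+1)*(a+2*m+e+1)*(b+2*m+e+1)/(c+b+3*m+2*e+1)
    - (2*m+e)*(a+2*m+e)*(b+2*m+e)/(c+b+3*m+2*e)

/-- β coefficient `β_{2m+e}^{(1−e)}(a,b,c)`. -/
noncomputable def betaDiff (a b c m e : ℝ) : ℝ :=
  (2*m+e+1)*(a+2*m+e+1)*(b+2*m+e+1)/(c+b+3*m+e+2)
    - (2*m+e)*(a+2*m+e)*(b+2*m+e)/(c+b+3*m+e)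

/-- The recurrence coefficient `β_n^{(d)}(a,b,c)`, writing `n = 2m+e` with `e ∈ {0,1}`. -/
noncomputable def betaC (d : ℕ) (a b c : ℝ) (n : ℕ) : ℝ :=
  if n % 2 = d % 2 then betaSame a b c (n / 2) (n % 2) else betaDiff a b c (n / 2) (n % 2)

/-- α coefficient `α_{2m+e}^{(e)}(a,b,c)`. -/
noncomputable def alphaSame (a b c m e : ℝ) : ℝ :=
  ((2*m+e)*(a+2*m+e)*(b+2*m+e)/(c+b+3*m+2*e)) *
    ((2*m+e-1)*(a+2*m+e-1)*(b+2*m+e-1)/(2*(c+b+3*m+2*e-1))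
      - (2*m+e)*(a+2*m+e)*(b+2*m+e)/(c+b+3*m+2*e)
      + (2*m+e+1)*(a+2*m+e+1)*(b+2*m+e+1)/(2*(c+b+3*m+2*e+1)))

/-- The recurrence coefficient `α_n^{(d)}(a,b,c)`, writing `n = 2m+e` with `e ∈ {0,1}`;
`α_{2m+e}^{(1−e)}(a,b,c) = α_{2m+e}^{(e)}(a,b,c−e)`. -/
noncomputable def alphaC (d : ℕ) (a b c : ℝ) (n : ℕ) : ℝ :=
  if n % 2 = d % 2 then alphaSame a b c (n / 2) (n % 2)
  else alphaSame a b (c - (n % 2)) (n / 2) (n % 2)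

/-- γ coefficient `γ_{2m+e}^{(e)}(a,b,c)`. -/
noncomputable def gammaSame (a b c m e : ℝ) : ℝ :=
  poch (2*m+e) 2 * poch (a+2*m+e) 2 * poch (b+2*m+e) 2 *
    ((c+m+e)*(c+b-a+m+e)*(c+b+m+e)) /
    (poch (c+b+3*m-1+2*e) 3 * poch (c+b+3*m+2*e) 3)

/-- γ coefficient `γ_{2m+e}^{(1−e)}(a,b,c)`. -/
noncomputable def gammaDiff (a b c m e : ℝ) : ℝ :=
  poch (2*m+e) 2 * poch (a+2*m+e) 2 * poch (b+2*m+e) 2 / poch (c+b+3*m+e) 3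

/-- The recurrence coefficient `γ_n^{(d)}(a,b,c)`, writing `n = 2m+e` with `e ∈ {0,1}`. -/
noncomputable def gammaC (d : ℕ) (a b c : ℝ) (n : ℕ) : ℝ :=
  if n % 2 = d % 2 then gammaSame a b c (n / 2) (n % 2) else gammaDiff a b c (n / 2) (n % 2)

open Filter

/-!
Writing `n = 2m + d`, the parity `d` only shifts `c` by `∓ d / 2`, so each coefficient is an
explicit rational function of `m`. Divided by the right power of `m`, it equals `Φ (D / m, 1 / m)`,
where `D ~ 3m` is the affine denominator and `Φ` is rational and continuous at `(3, 0)`; the limit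
is `Φ (3, 0)`. For `γ` this is a product of ratios. For `β` and `α` the leading orders cancel:
they are a first and half a second difference of `A(n) / D`, `A(n) = n (a + n) (b + n)`, and `Φ`
comes from expanding the cubic `A` around `n` before dividing.
-/

open Topology

theorem poch_two (z : ℝ) : poch z 2 = z * (z + 1) := by
  simp [poch, Finset.prod_range_succ]

theorem poch_three (z : ℝ) : poch z 3 = z * (z + 1) * (z + 2) := by
  norm_num [poch, Finset.prod_range_succ]

section ParityShift

variable (a b c : ℝ)

theorem betaSame_add_half (x e : ℝ) :
    betaSame a b c (x + e / 2) 0 = betaSame a b (c - e / 2) x e := by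
  simp only [betaSame]; ring

theorem betaDiff_add_half (x e : ℝ) :
    betaDiff a b c (x + e / 2) 0 = betaDiff a b (c + e / 2) x e := by
  simp only [betaDiff]; ring

theorem alphaSame_add_half (x e : ℝ) :
    alphaSame a b c (x + e / 2) 0 = alphaSame a b (c - e / 2) x e := by
  simp only [alphaSame]; ring

theorem gammaSame_add_half (x e : ℝ) :
    gammaSame a b c (x + e / 2) 0 = gammaSame a b (c - e / 2) x e := by
  simp only [gammaSame, poch_two, poch_three]; ring

theorem gammaDiff_add_half (x e : ℝ) :
    gammaDiff a b c (x + e / 2) 0 = gammaDiff a b (c + e / 2) x e := by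
  simp only [gammaDiff, poch_two, poch_three]; ring

-- `betaC`, `alphaC`, `gammaC` cast the index to `ℝ` before taking `n % 2`, which then vanishes.
theorem real_mod_two_eq_zero (x : ℝ) : x % 2 = 0 := by
  simp

theorem natCast_two_mul_add_div_two (m d : ℕ) : ((2 * m + d : ℕ) : ℝ) / 2 = m + d / 2 := by
  push_cast; ring

variable {d : ℕ} (m : ℕ)

theorem betaC_two_mul_add : betaC d a b c (2 * m + d) = betaSame a b (c - d / 2) m d := by
  rw [betaC, if_pos (by omega), natCast_two_mul_add_div_two, real_mod_two_eq_zero,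
    betaSame_add_half]

theorem betaC_one_sub_two_mul_add (hd : d ≤ 1) :
    betaC (1 - d) a b c (2 * m + d) = betaDiff a b (c + d / 2) m d := by
  rw [betaC, if_neg (by omega), natCast_two_mul_add_div_two, real_mod_two_eq_zero,
    betaDiff_add_half]

theorem alphaC_two_mul_add : alphaC d a b c (2 * m + d) = alphaSame a b (c - d / 2) m d := by
  rw [alphaC, if_pos (by omega), natCast_two_mul_add_div_two, real_mod_two_eq_zero,
    alphaSame_add_half]

theorem gammaC_two_mul_add : gammaC d a b c (2 * m + d) = gammaSame a b (c - d / 2) m d := by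
  rw [gammaC, if_pos (by omega), natCast_two_mul_add_div_two, real_mod_two_eq_zero,
    gammaSame_add_half]

theorem gammaC_one_sub_two_mul_add (hd : d ≤ 1) :
    gammaC (1 - d) a b c (2 * m + d) = gammaDiff a b (c + d / 2) m d := by
  rw [gammaC, if_neg (by omega), natCast_two_mul_add_div_two, real_mod_two_eq_zero,
    gammaDiff_add_half]

end ParityShift

theorem tendsto_of_eq_comp_div_inv {Φ : ℝ → ℝ → ℝ} {f D : ℝ → ℝ} {k y L : ℝ} (hk : 0 < k)
    (hD : ∀ x, D x = k * x + y) (hΦ : ContinuousAt (Function.uncurry Φ) (k, 0))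
    (hL : Φ k 0 = L) (hf : ∀ x > 0, 1 < D x → f x = Φ (D x / x) x⁻¹) :
    Tendsto f atTop (𝓝 L) := by
  subst hL
  have hDx : Tendsto (fun x => D x / x) atTop (𝓝 k) := by
    have h := (tendsto_inv_atTop_zero.const_mul y).const_add k
    rw [mul_zero, add_zero] at h
    refine h.congr' ?_
    filter_upwards [eventually_gt_atTop 0] with x hx
    rw [hD]
    field_simp
  have hDtop : Tendsto (fun x => k * x + y) atTop atTop :=
    tendsto_atTop_add_const_right _ y (tendsto_id.const_mul_atTop hk)
  have hD1 : ∀ᶠ x in atTop, 1 < D x := by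
    simpa only [hD] using hDtop.eventually_gt_atTop 1
  refine (hΦ.tendsto.comp (hDx.prodMk_nhds tendsto_inv_atTop_zero)).congr' ?_
  filter_upwards [eventually_gt_atTop 0, hD1] with x hx hx1
  exact (hf x hx hx1).symm

section Limits

variable (a b c e : ℝ)

-- `A(n+1)/(D+1) - A(n)/D = (ΔA(n) D - A(n)) / (D (D+1))` with
-- `ΔA(n) = 3n² + (2a+2b+3)n + (a+1)(b+1)`.
theorem tendsto_betaSame_div_atTop :
    Tendsto (fun x => betaSame a b c x e / x) atTop (𝓝 (28 / 9)) := by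
  refine tendsto_of_eq_comp_div_inv (D := fun x => c + b + 3 * x + 2 * e) (y := c + b + 2 * e)
    (Φ := fun E u =>
      ((3 * (2 + e*u)^2 + (2*a + 2*b + 3) * (2 + e*u) * u + (a+1) * (b+1) * u^2) * E
        - (2 + e*u) * (2 + (a+e)*u) * (2 + (b+e)*u)) / (E * (E + u)))
    three_pos (fun x => by ring) (by fun_prop (disch := norm_num)) (by norm_num) ?_
  intro x hx hD
  simp only [betaSame]
  generalize c + b + 3 * x + 2 * e = D at hD ⊢
  field_simp
  ring

theorem tendsto_betaDiff_div_atTop :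
    Tendsto (fun x => betaDiff a b c x e / x) atTop (𝓝 (20 / 9)) := by
  refine tendsto_of_eq_comp_div_inv (D := fun x => c + b + 3 * x + e) (y := c + b + e)
    (Φ := fun E u =>
      ((3 * (2 + e*u)^2 + (2*a + 2*b + 3) * (2 + e*u) * u + (a+1) * (b+1) * u^2) * E
        - 2 * (2 + e*u) * (2 + (a+e)*u) * (2 + (b+e)*u)) / (E * (E + 2 * u)))
    three_pos (fun x => by ring) (by fun_prop (disch := norm_num)) (by norm_num) ?_
  intro x hx hD
  simp only [betaDiff]
  generalize c + b + 3 * x + e = D at hD ⊢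
  field_simp
  ring

-- Taylor expansion of the cubic `A` turns the second factor of `α` into
-- `(A/D - A' + A'' D / 2 - 1) / (D² - 1)`.
theorem tendsto_alphaSame_div_sq_atTop :
    Tendsto (fun x => alphaSame a b c x e / x ^ 2) atTop (𝓝 (208 / 81)) := by
  refine tendsto_of_eq_comp_div_inv (D := fun x => c + b + 3 * x + 2 * e) (y := c + b + 2 * e)
    (Φ := fun E u => (2 + e*u) * (2 + (a+e)*u) * (2 + (b+e)*u) / E *
      ((2 + e*u) * (2 + (a+e)*u) * (2 + (b+e)*u) / E
        - (3 * (2 + e*u)^2 + 2 * (a+b) * (2 + e*u) * u + a * b * u^2)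
        + (3 * (2 + e*u) + (a+b) * u) * E - u^2) / ((E - u) * (E + u)))
    three_pos (fun x => by ring) (by fun_prop (disch := norm_num)) (by norm_num) ?_
  intro x hx hD
  simp only [alphaSame]
  generalize c + b + 3 * x + 2 * e = D at hD ⊢
  have : D - 1 ≠ 0 := by linarith
  field_simp
  ring

theorem tendsto_gammaSame_div_cube_atTop :
    Tendsto (fun x => gammaSame a b c x e / x ^ 3) atTop (𝓝 (64 / 729)) := by
  refine tendsto_of_eq_comp_div_inv (D := fun x => c + b + 3 * x + 2 * e) (y := c + b + 2 * e)
    (Φ := fun E u => (2 + e*u) * (2 + (e+1)*u) * (2 + (a+e)*u) * (2 + (a+e+1)*u)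
      * (2 + (b+e)*u) * (2 + (b+e+1)*u) * (1 + (c+e)*u) * (1 + (c+b-a+e)*u) * (1 + (c+b+e)*u)
      / ((E - u) * E * (E + u) * (E * (E + u) * (E + 2*u))))
    three_pos (fun x => by ring) (by fun_prop (disch := norm_num)) (by norm_num) ?_
  intro x hx hD
  simp only [gammaSame, poch_two, poch_three]
  rw [show c + b + 3 * x - 1 + 2 * e = c + b + 3 * x + 2 * e - 1 by ring]
  generalize c + b + 3 * x + 2 * e = D at hD ⊢
  rw [sub_add_cancel, show D - 1 + 2 = D + 1 by ring]
  have : D - 1 ≠ 0 := by linarith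
  field_simp
  ring

theorem tendsto_gammaDiff_div_cube_atTop :
    Tendsto (fun x => gammaDiff a b c x e / x ^ 3) atTop (𝓝 (64 / 27)) := by
  refine tendsto_of_eq_comp_div_inv (D := fun x => c + b + 3 * x + e) (y := c + b + e)
    (Φ := fun E u => (2 + e*u) * (2 + (e+1)*u) * (2 + (a+e)*u) * (2 + (a+e+1)*u)
      * (2 + (b+e)*u) * (2 + (b+e+1)*u) / (E * (E + u) * (E + 2*u)))
    three_pos (fun x => by ring) (by fun_prop (disch := norm_num)) (by norm_num) ?_
  intro x hx hD
  simp only [gammaDiff, poch_two, poch_three]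
  generalize c + b + 3 * x + e = D at hD ⊢
  field_simp
  ring

end Limits

theorem recurrence_coefficients_asymptotics_general (a b c : ℝ) (d : ℕ) (hd : d ≤ 1) :
    Tendsto (fun m : ℕ => betaC d a b c (2 * m + d) / m) atTop (nhds (28 / 9)) ∧
    Tendsto (fun m : ℕ => betaC (1 - d) a b c (2 * m + d) / m) atTop (nhds (20 / 9)) ∧
    Tendsto (fun m : ℕ => alphaC d a b c (2 * m + d) / (m : ℝ) ^ 2) atTop
      (nhds (208 / 81)) ∧
    Tendsto (fun m : ℕ => gammaC d a b c (2 * m + d) / (m : ℝ) ^ 3) atTop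
      (nhds (64 / 729)) ∧
    Tendsto (fun m : ℕ => gammaC (1 - d) a b c (2 * m + d) / (m : ℝ) ^ 3) atTop
      (nhds (64 / 27)) := by
  have hm := tendsto_natCast_atTop_atTop (R := ℝ)
  simp only [betaC_two_mul_add, betaC_one_sub_two_mul_add _ _ _ _ hd, alphaC_two_mul_add,
    gammaC_two_mul_add, gammaC_one_sub_two_mul_add _ _ _ _ hd]
  exact ⟨(tendsto_betaSame_div_atTop ..).comp hm, (tendsto_betaDiff_div_atTop ..).comp hm,
    (tendsto_alphaSame_div_sq_atTop ..).comp hm, (tendsto_gammaSame_div_cube_atTop ..).comp hm,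
    (tendsto_gammaDiff_div_cube_atTop ..).comp hm⟩

theorem recurrence_coefficients_asymptotics (a b c : ℝ) (ha : a > -1) (hb : b > -1)
    (hc : c > max 0 (a - b)) (d : ℕ) (hd : d ≤ 1) :
    Tendsto (fun m : ℕ => betaC d a b c (2 * m + d) / m) atTop (nhds (28 / 9)) ∧
    Tendsto (fun m : ℕ => betaC (1 - d) a b c (2 * m + d) / m) atTop (nhds (20 / 9)) ∧
    Tendsto (fun m : ℕ => alphaC d a b c (2 * m + d) / (m : ℝ) ^ 2) atTop
      (nhds (208 / 81)) ∧
    Tendsto (fun m : ℕ => gammaC d a b c (2 * m + d) / (m : ℝ) ^ 3) atTop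
      (nhds (64 / 729)) ∧
    Tendsto (fun m : ℕ => gammaC (1 - d) a b c (2 * m + d) / (m : ℝ) ^ 3) atTop
      (nhds (64 / 27)) :=
  recurrence_coefficients_asymptotics_general a b c d hd
end

section
/- Let a > −1 and b > −1 be real numbers. Then for every nonnegative integer n and every real x, (d/dx) R_{n+1}(x; a, b) = (n+1) R_n(x; a+1, b+1). (The sequence of derivatives of the 2-orthogonal polynomials for the modified Bessel weights is the same sequence with parameters shifted by one.) -/
/-- The monic 2-orthogonal polynomial for the modified Bessel weights:
`R_n(x; a, b) = Σ_{j=0}^n (−1)^{n−j} C(n,j) (a+1+j)_{n−j}(b+1+j)_{n−j} x^j`. -/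
noncomputable def Rbes (a b : ℝ) (n : ℕ) (x : ℝ) : ℝ :=
  ∑ j ∈ Finset.range (n + 1),
    (-1 : ℝ) ^ (n - j) * (n.choose j : ℝ) *
      (poch (a + 1 + j) (n - j) * poch (b + 1 + j) (n - j)) * x ^ j

theorem deriv_Rbes (a b : ℝ) (ha : a > -1) (hb : b > -1) (n : ℕ) (x : ℝ) :
    deriv (fun y => Rbes a b (n + 1) y) x = (n + 1) * Rbes (a + 1) (b + 1) n x := by
  have h : HasDerivAt (fun y => Rbes a b (n + 1) y)
      (∑ j ∈ Finset.range (n + 2),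
        (-1 : ℝ) ^ (n + 1 - j) * ((n + 1).choose j : ℝ) *
          (poch (a + 1 + j) (n + 1 - j) * poch (b + 1 + j) (n + 1 - j)) *
          (j * x ^ (j - 1))) x := by
    unfold Rbes
    apply HasDerivAt.fun_sum
    intro j _
    exact (hasDerivAt_pow j x).const_mul _
  rw [h.deriv]
  rw [Finset.sum_range_succ']
  simp only [Nat.cast_zero, zero_mul, mul_zero, add_zero]
  unfold Rbes
  rw [Finset.mul_sum]
  apply Finset.sum_congr rfl
  intro j hj
  have hj' : j ≤ n := by simpa using Nat.lt_succ_iff.mp (Finset.mem_range.mp hj)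
  have hsub : n + 1 - (j + 1) = n - j := by omega
  have hch : ((j : ℝ) + 1) * ((n + 1).choose (j + 1) : ℝ) = (n + 1) * (n.choose j : ℝ) := by
    have := Nat.add_one_mul_choose_eq n j
    have : ((n + 1) * n.choose j : ℕ) = ((n + 1).choose (j + 1) * (j + 1) : ℕ) := this
    have h2 : ((n + 1 : ℕ) : ℝ) * (n.choose j : ℝ) = ((n + 1).choose (j + 1) : ℝ) * ((j : ℝ) + 1) := by
      exact_mod_cast congrArg (Nat.cast : ℕ → ℝ) this
    push_cast at h2 ⊢
    linarith
  have hpa : (a + 1 + ((j : ℝ) + 1)) = (a + 1) + 1 + j := by ring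
  have hpb : (b + 1 + ((j : ℝ) + 1)) = (b + 1) + 1 + j := by ring
  push_cast
  rw [hpa, hpb]
  linear_combination ((-1 : ℝ) ^ (n - j) *
    (poch (a + 1 + 1 + (j : ℝ)) (n - j) * poch (b + 1 + 1 + (j : ℝ)) (n - j)) * x ^ j) * hch
end
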